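/- arXiv:2410.09737 — 3 statements merged into one kernel-verified Lean document; each statement's English description precedes it below -/
import Mathlib

section
/- Let G and H be simple undirected graphs on n nodes with adjacency matrices A_G, A_H and Laplacians L_G, L_H. The following two statements are equivalent. (i) There exists a permutation matrix P ∈ S_n with A_G = P A_H P^T. (ii) Spec G = Spec H, and, writing ((λ_1,μ_1),…,(λ_K,μ_K)) for the common spectrum, for every choice of matrices V_j, V'_j ∈ ℝ^{n×μ_j} whose columns are mutually orthogonal normalized eigenvectors of L_G (respectively L_H) corresponding to eigenvalue λ_j (j = 1,…,K), there exist a permutation matrix P ∈ S_n and orthogonal matrices Q_j ∈ O(μ_j) (j = 1,…,K) such that V_j = P V'_j Q_j for all j. -/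
open Matrix

def IsPermMatrix {n : ℕ} (P : Matrix (Fin n) (Fin n) ℝ) : Prop :=
  ∃ σ : Equiv.Perm (Fin n), ∀ i j, P i j = if σ j = i then 1 else 0

def IsOrthMatrix {p : ℕ} (Q : Matrix (Fin p) (Fin p) ℝ) : Prop :=
  Q * Qᵀ = 1 ∧ Qᵀ * Q = 1

noncomputable def frobNorm {m k : ℕ} (A : Matrix (Fin m) (Fin k) ℝ) : ℝ :=
  Real.sqrt (∑ i, ∑ j, (A i j) ^ 2)

noncomputable def vecNorm {m : ℕ} (v : Fin m → ℝ) : ℝ :=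
  Real.sqrt (∑ i, (v i) ^ 2)

noncomputable def specNorm {m k : ℕ} (A : Matrix (Fin m) (Fin k) ℝ) : ℝ :=
  ‖LinearMap.toContinuousLinearMap (Matrix.toEuclideanLin A)‖

noncomputable def orthMinDist {m k : ℕ} (X X' : Matrix (Fin m) (Fin k) ℝ) : ℝ :=
  sInf {r : ℝ | ∃ Q : Matrix (Fin k) (Fin k) ℝ, IsOrthMatrix Q ∧ r = frobNorm (X - X' * Q)}

def IsSortedEigenSystem {n : ℕ} (A : Matrix (Fin n) (Fin n) ℝ)
    (lam : Fin n → ℝ) (v : Fin n → Fin n → ℝ) : Prop :=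
  Monotone lam ∧ (∀ i, A.mulVec (v i) = lam i • v i) ∧
    (∀ i j, dotProduct (v i) (v j) = if i = j then 1 else 0)

def IsOrthonormalEigenbasis {n μ : ℕ} (L : Matrix (Fin n) (Fin n) ℝ) (lam : ℝ)
    (v : Fin μ → Fin n → ℝ) : Prop :=
  (∀ j, L.mulVec (v j) = lam • v j) ∧
    (∀ j k, dotProduct (v j) (v k) = if j = k then 1 else 0) ∧
    (Submodule.span ℝ (Set.range v) = Module.End.eigenspace (Matrix.mulVecLin L) lam)

def IsSpectrum {n : ℕ} (L : Matrix (Fin n) (Fin n) ℝ) (K : ℕ)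
    (lam : Fin K → ℝ) (mult : Fin K → ℕ) : Prop :=
  StrictMono lam ∧ (∀ j, 0 < mult j) ∧
    (∀ j, Module.finrank ℝ (Module.End.eigenspace (Matrix.mulVecLin L) (lam j)) = mult j) ∧
    (∀ x : ℝ, Module.End.HasEigenvalue (Matrix.mulVecLin L) x → ∃ j, lam j = x)

def IsOpInvariantUniversal (p : ℕ) (f : ∀ n : ℕ, Matrix (Fin n) (Fin p) ℝ → (Fin n → ℝ)) : Prop :=
  ∀ (n : ℕ) (V V' : Matrix (Fin n) (Fin p) ℝ) (P : Matrix (Fin n) (Fin n) ℝ),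
    IsPermMatrix P →
      (f n V = P.mulVec (f n V') ↔
        ∃ Q : Matrix (Fin p) (Fin p) ℝ, IsOrthMatrix Q ∧ V = P * V' * Q)

noncomputable def smoothMat {n : ℕ} (ρ : ℝ → ℝ) (lam : Fin n → ℝ) (v : Fin n → Fin n → ℝ)
    (i : Fin n) : Matrix (Fin n) (Fin n) ℝ :=
  Matrix.of fun r j => v j r * ρ |lam j - lam i|

noncomputable def OGEAug {n m : ℕ} (ψ : (Fin m → ℝ) → ℝ) (φ : (Fin 2 → ℝ) → Fin m → ℝ)
    (f : Matrix (Fin n) (Fin n) ℝ → Fin n → ℝ) (ρ : ℝ → ℝ)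
    (lam : Fin n → ℝ) (v : Fin n → Fin n → ℝ) : Fin n → ℝ :=
  fun r => ψ (∑ i, φ ![lam i, f (smoothMat ρ lam v i) r])

noncomputable def ZAug {n K : ℕ} (g : Finset (ℝ × ℝ × ℝ) → ℝ)
    (fp : ∀ p m : ℕ, Matrix (Fin m) (Fin p) ℝ → Fin m → ℝ)
    (lam : Fin K → ℝ) (mult : Fin K → ℕ)
    (v : (j : Fin K) → Fin (mult j) → Fin n → ℝ) : Fin n → ℝ :=
  fun i => g (Finset.image (fun j => ((mult j : ℝ), lam j,
    fp (mult j) n (Matrix.of fun r c => v j c r) i)) Finset.univ)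

namespace StmtAux


open Matrix Submodule Module Module.End Set

variable {n : ℕ}

lemma perm_mul_transpose {P : Matrix (Fin n) (Fin n) ℝ} {σ : Equiv.Perm (Fin n)}
    (hσ : ∀ i j, P i j = if σ j = i then 1 else 0) : P * Pᵀ = 1 := by
  ext i j
  simp only [Matrix.mul_apply, transpose_apply, hσ, Matrix.one_apply]
  simp only [ite_mul, one_mul, zero_mul, Equiv.apply_eq_iff_eq_symm_apply]
  by_cases h : i = j <;> simp [h, Finset.sum_ite_eq']

lemma perm_transpose_mul {P : Matrix (Fin n) (Fin n) ℝ} {σ : Equiv.Perm (Fin n)}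
    (hσ : ∀ i j, P i j = if σ j = i then 1 else 0) : Pᵀ * P = 1 := by
  ext i j
  simp only [Matrix.mul_apply, transpose_apply, hσ, Matrix.one_apply]
  simp only [ite_mul, one_mul, zero_mul, mul_ite, mul_one, mul_zero]
  by_cases h : i = j <;> simp [h, Finset.sum_ite_eq', σ.injective.eq_iff, eq_comm]

lemma conj_entry {P M : Matrix (Fin n) (Fin n) ℝ} {σ : Equiv.Perm (Fin n)}
    (hσ : ∀ i j, P i j = if σ j = i then 1 else 0) (i j : Fin n) :
    (P * M * Pᵀ) i j = M (σ⁻¹ i) (σ⁻¹ j) := by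
  simp only [Matrix.mul_apply, transpose_apply, hσ, Equiv.apply_eq_iff_eq_symm_apply,
    ite_mul, one_mul, zero_mul, mul_ite, mul_one, mul_zero, Finset.sum_ite_eq,
    Finset.sum_ite_eq', Finset.mem_univ, if_true]
  rfl



open Matrix Submodule Module Module.End Set

variable {n : ℕ}

lemma conj_eigvec {L1 L2 P : Matrix (Fin n) (Fin n) ℝ} (hPPt : P * Pᵀ = 1)
    (hC : L1 = P * L2 * Pᵀ) {x : ℝ} {w : Fin n → ℝ} (h : L1 *ᵥ w = x • w) :
    L2 *ᵥ (Pᵀ *ᵥ w) = x • (Pᵀ *ᵥ w) := by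
  have hPtP : Pᵀ * P = 1 := by
    have := mul_eq_one_comm.mp hPPt
    exact this
  have hL2 : L2 = Pᵀ * L1 * P := by
    rw [hC]
    calc L2 = (Pᵀ * P) * L2 * (Pᵀ * P) := by rw [hPtP]; simp
      _ = Pᵀ * (P * L2 * Pᵀ) * P := by simp only [Matrix.mul_assoc]
  rw [hL2, ← Matrix.mulVec_mulVec, ← Matrix.mulVec_mulVec, Matrix.mulVec_mulVec w P Pᵀ,
    hPPt, Matrix.one_mulVec, h, Matrix.mulVec_smul]

lemma conj_eigvec' {L1 L2 P : Matrix (Fin n) (Fin n) ℝ} (hPPt : P * Pᵀ = 1)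
    (hC : L1 = P * L2 * Pᵀ) {x : ℝ} {w : Fin n → ℝ} (h : L2 *ᵥ w = x • w) :
    L1 *ᵥ (P *ᵥ w) = x • (P *ᵥ w) := by
  have hPtP : Pᵀ * P = 1 := mul_eq_one_comm.mp hPPt
  rw [hC, ← Matrix.mulVec_mulVec, ← Matrix.mulVec_mulVec, Matrix.mulVec_mulVec w Pᵀ P,
    hPtP, Matrix.one_mulVec, h, Matrix.mulVec_smul]

lemma eigenspace_conj {L1 L2 P : Matrix (Fin n) (Fin n) ℝ} (hPPt : P * Pᵀ = 1)
    (hC : L1 = P * L2 * Pᵀ) (x : ℝ) :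
    eigenspace (mulVecLin L1) x = (eigenspace (mulVecLin L2) x).map (mulVecLin P) := by
  ext w
  simp only [Submodule.mem_map, mem_eigenspace_iff, mulVecLin_apply]
  constructor
  · intro h
    exact ⟨Pᵀ *ᵥ w, conj_eigvec hPPt hC h, by
      rw [Matrix.mulVec_mulVec, hPPt, Matrix.one_mulVec]⟩
  · rintro ⟨u, hu, rfl⟩
    exact conj_eigvec' hPPt hC hu

lemma isSpectrum_conj {L1 L2 P : Matrix (Fin n) (Fin n) ℝ} (hPPt : P * Pᵀ = 1)
    (hC : L1 = P * L2 * Pᵀ) {K : ℕ} {lam : Fin K → ℝ} {mult : Fin K → ℕ}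
    (h : IsSpectrum L1 K lam mult) : IsSpectrum L2 K lam mult := by
  have hPtP : Pᵀ * P = 1 := mul_eq_one_comm.mp hPPt
  let e : (Fin n → ℝ) ≃ₗ[ℝ] (Fin n → ℝ) :=
    LinearEquiv.ofLinear (mulVecLin P) (mulVecLin Pᵀ)
      (by rw [← mulVecLin_mul, hPPt, mulVecLin_one])
      (by rw [← mulVecLin_mul, hPtP, mulVecLin_one])
  obtain ⟨h1, h2, h3, h4⟩ := h
  refine ⟨h1, h2, fun j => ?_, fun x hx => ?_⟩
  · rw [← h3 j, eigenspace_conj hPPt hC (lam j)]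
    exact (LinearEquiv.finrank_map_eq e _).symm
  · apply h4
    rw [Module.End.hasEigenvalue_iff] at hx ⊢
    rw [eigenspace_conj hPPt hC x]
    obtain ⟨u, hu, hune⟩ := Submodule.ne_bot_iff _ |>.mp hx
    intro hbot
    have h0 : mulVecLin P u ∈ (⊥ : Submodule ℝ (Fin n → ℝ)) :=
      hbot ▸ Submodule.mem_map_of_mem hu
    rw [Submodule.mem_bot] at h0
    apply hune
    have h1' := congrArg (fun w => Pᵀ *ᵥ w) h0
    simp only [mulVecLin_apply, Matrix.mulVec_mulVec, hPtP, Matrix.one_mulVec,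
      Matrix.mulVec_zero] at h1'
    exact h1'



open Matrix Submodule Module Module.End Set

variable {n : ℕ}

/-- column of product -/
lemma col_mul {m k l : ℕ} (A : Matrix (Fin m) (Fin k) ℝ) (B : Matrix (Fin k) (Fin l) ℝ)
    (c : Fin l) : (fun r => (A * B) r c) = A *ᵥ (fun s => B s c) := by
  funext r
  simp [Matrix.mul_apply, mulVec, dotProduct]

/-- mulVec as combination of columns -/
lemma mulVec_eq_sum_cols {μ : ℕ} (v : Fin μ → Fin n → ℝ) (x : Fin μ → ℝ) :
    (Matrix.of fun r c => v c r) *ᵥ x = ∑ k, x k • v k := by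
  funext r
  simp [mulVec, dotProduct, Finset.sum_apply, mul_comm]

lemma transpose_mulVec_dot {μ : ℕ} (v : Fin μ → Fin n → ℝ) (w : Fin n → ℝ) (k : Fin μ) :
    ((Matrix.of fun r c => v c r)ᵀ *ᵥ w) k = dotProduct (v k) w := by
  simp [mulVec, dotProduct, transpose_apply]

/-- projection identity for orthonormal families -/
lemma proj_eq_self {μ : ℕ} {v : Fin μ → Fin n → ℝ}
    (hv : ∀ j k, dotProduct (v j) (v k) = if j = k then 1 else 0)
    {w : Fin n → ℝ} (hw : w ∈ Submodule.span ℝ (Set.range v)) :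
    (Matrix.of fun r c => v c r) *ᵥ ((Matrix.of fun r c => v c r)ᵀ *ᵥ w) = w := by
  obtain ⟨c, rfl⟩ := mem_span_range_iff_exists_fun ℝ |>.mp hw
  have hc : ((Matrix.of fun r c => v c r)ᵀ *ᵥ ∑ i, c i • v i) = c := by
    funext k
    rw [transpose_mulVec_dot]
    simp only [dotProduct, Finset.sum_apply, Pi.smul_apply, smul_eq_mul, Finset.mul_sum]
    rw [Finset.sum_comm]
    have : ∀ i, ∑ s, v k s * (c i * v i s) = c i * dotProduct (v k) (v i) := by
      intro i; simp [dotProduct, Finset.mul_sum]; ring_nf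
      exact Finset.sum_congr rfl fun s _ => by ring
    simp_rw [this, hv]
    simp
  rw [hc, mulVec_eq_sum_cols]

/-- matrix form of the projection identity -/
lemma proj_mat_eq_self {μ k : ℕ} {v : Fin μ → Fin n → ℝ}
    (hv : ∀ j k, dotProduct (v j) (v k) = if j = k then 1 else 0)
    {M : Matrix (Fin n) (Fin k) ℝ}
    (hM : ∀ c, (fun r => M r c) ∈ Submodule.span ℝ (Set.range v)) :
    (Matrix.of fun r c => v c r) * ((Matrix.of fun r c => v c r)ᵀ * M) = M := by
  set V : Matrix (Fin n) (Fin μ) ℝ := Matrix.of fun r c => v c r with hV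
  ext r c
  calc (V * (Vᵀ * M)) r c = (V *ᵥ (fun s => (Vᵀ * M) s c)) r := congrFun (col_mul _ _ c) r
    _ = (V *ᵥ (Vᵀ *ᵥ fun s => M s c)) r := by rw [col_mul]
    _ = M r c := congrFun (proj_eq_self hv (hM c)) r

lemma transpose_mul_self_eq_one {μ : ℕ} {v : Fin μ → Fin n → ℝ}
    (hv : ∀ j k, dotProduct (v j) (v k) = if j = k then 1 else 0) :
    (Matrix.of fun r c => v c r)ᵀ * (Matrix.of fun r c => v c r) = 1 := by
  ext a b
  simp only [Matrix.mul_apply, transpose_apply, of_apply, Matrix.one_apply]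
  exact hv a b



open Matrix Submodule Module Module.End Set

variable {n : ℕ} {L : Matrix (Fin n) (Fin n) ℝ}

noncomputable def hermB (hL : L.IsHermitian) : Basis (Fin n) ℝ (Fin n → ℝ) :=
  (hL.eigenvectorBasis.toBasis).map (WithLp.linearEquiv 2 ℝ (Fin n → ℝ))

lemma hermB_apply (hL : L.IsHermitian) (i : Fin n) :
    hermB hL i = ⇑(hL.eigenvectorBasis i) := by
  simp [hermB]

lemma hermB_mulVec (hL : L.IsHermitian) (i : Fin n) :
    L *ᵥ hermB hL i = hL.eigenvalues i • hermB hL i := by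
  rw [hermB_apply]
  exact hL.mulVec_eigenvectorBasis i

lemma hermB_dot (hL : L.IsHermitian) (i j : Fin n) :
    dotProduct (hermB hL i) (hermB hL j) = if i = j then 1 else 0 := by
  have h := orthonormal_iff_ite.mp hL.eigenvectorBasis.orthonormal i j
  rw [hermB_apply, hermB_apply]
  rw [← h]
  simp [PiLp.inner_apply, dotProduct, RCLike.inner_apply]
  exact Finset.sum_congr rfl fun _ _ => mul_comm _ _

lemma hermB_span_group (hL : L.IsHermitian) (x : ℝ) :
    Submodule.span ℝ (hermB hL '' {i | hL.eigenvalues i = x})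
      = eigenspace (mulVecLin L) x := by
  set B := hermB hL with hB
  apply le_antisymm
  · rw [Submodule.span_le]
    rintro w ⟨i, hi, rfl⟩
    rw [SetLike.mem_coe, mem_eigenspace_iff, mulVecLin_apply, hermB_mulVec, hi]
  · intro w hw
    rw [mem_eigenspace_iff, mulVecLin_apply] at hw
    have hrep := B.sum_repr w
    have key : ∀ i, hL.eigenvalues i ≠ x → B.repr w i = 0 := by
      intro i hix
      have h1 : L *ᵥ w = ∑ k, (B.repr w k * hL.eigenvalues k) • B k := by
        conv_lhs => rw [← hrep]
        rw [← mulVecLin_apply, map_sum]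
        refine Finset.sum_congr rfl fun k _ => ?_
        rw [LinearMap.map_smul, mulVecLin_apply, hermB_mulVec, smul_smul]
      have h2 : x • w = ∑ k, (x * B.repr w k) • B k := by
        conv_lhs => rw [← hrep]
        rw [Finset.smul_sum]
        exact Finset.sum_congr rfl fun k _ => by rw [smul_smul]
      have h3 : ∑ k, ((B.repr w k * hL.eigenvalues k) - x * B.repr w k) • B k = 0 := by
        simp only [sub_smul, Finset.sum_sub_distrib, ← h1, ← h2, hw, sub_self]
      have h4 := Fintype.linearIndependent_iff.mp B.linearIndependent _ h3 i
      have h5 : B.repr w i * (hL.eigenvalues i - x) = 0 := by linarith [h4]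
      rcases mul_eq_zero.mp h5 with h | h
      · exact h
      · exact absurd (by linarith) hix
    rw [← hrep]
    rw [← Finset.sum_filter_of_ne (p := fun k => hL.eigenvalues k = x)
      (fun k _ hne => by
        by_contra hek
        exact hne (by rw [key k hek, zero_smul]))]
    refine Submodule.sum_smul_mem _ _ fun k hk => Submodule.subset_span ?_
    exact ⟨k, (Finset.mem_filter.mp hk).2, rfl⟩

lemma hermB_finrank (hL : L.IsHermitian) (x : ℝ) :
    Module.finrank ℝ (eigenspace (mulVecLin L) x)
      = (Finset.univ.filter (fun i => hL.eigenvalues i = x)).card := by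
  rw [← hermB_span_group hL x,
    show {i | hL.eigenvalues i = x}
        = Set.range (Subtype.val : {i // hL.eigenvalues i = x} → Fin n) from
      Subtype.range_coe.symm,
    ← Set.range_comp,
    finrank_span_eq_card ((hermB hL).linearIndependent.comp _ Subtype.coe_injective),
    Fintype.card_subtype]

lemma herm_hasEigenvalue_iff (hL : L.IsHermitian) (x : ℝ) :
    Module.End.HasEigenvalue (mulVecLin L) x ↔ ∃ i, hL.eigenvalues i = x := by
  constructor
  · intro hx
    by_contra hno
    push_neg at hno
    rw [Module.End.hasEigenvalue_iff, ← hermB_span_group hL x] at hx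
    apply hx
    have : {i | hL.eigenvalues i = x} = (∅ : Set (Fin n)) := by
      ext i; simpa using hno i
    rw [this, Set.image_empty, Submodule.span_empty]
  · rintro ⟨i, rfl⟩
    exact Module.End.hasEigenvalue_of_hasEigenvector ⟨by
      rw [mem_eigenspace_iff, mulVecLin_apply, hermB_mulVec], (hermB hL).ne_zero i⟩


lemma exists_isSpectrum (hL : L.IsHermitian) :
    ∃ (K : ℕ) (lam : Fin K → ℝ) (mult : Fin K → ℕ), IsSpectrum L K lam mult := by
  classical
  set S : Finset ℝ := Finset.image hL.eigenvalues Finset.univ with hS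
  refine ⟨S.card, fun j => (S.orderIsoOfFin rfl j : ℝ),
    fun j => Module.finrank ℝ (eigenspace (mulVecLin L) ((S.orderIsoOfFin rfl j : ℝ))),
    ?_, ?_, fun j => rfl, ?_⟩
  · intro a b hab
    exact Subtype.coe_lt_coe.mpr ((S.orderIsoOfFin rfl).strictMono hab)
  · intro j
    have hmem : ((S.orderIsoOfFin rfl j : ℝ)) ∈ S := (S.orderIsoOfFin rfl j).2
    obtain ⟨i, -, hi⟩ := Finset.mem_image.mp hmem
    show 0 < Module.finrank ℝ (eigenspace (mulVecLin L) ((S.orderIsoOfFin rfl j : ℝ)))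
    rw [hermB_finrank hL]
    exact Finset.card_pos.mpr ⟨i, Finset.mem_filter.mpr ⟨Finset.mem_univ i, hi⟩⟩
  · intro x hx
    obtain ⟨i, hi⟩ := (herm_hasEigenvalue_iff hL x).mp hx
    have hxS : x ∈ S := Finset.mem_image.mpr ⟨i, Finset.mem_univ i, hi⟩
    refine ⟨(S.orderIsoOfFin rfl).symm ⟨x, hxS⟩, ?_⟩
    show ((S.orderIsoOfFin rfl) ((S.orderIsoOfFin rfl).symm ⟨x, hxS⟩) : ℝ) = x
    rw [OrderIso.apply_symm_apply]

lemma exists_eigenbases (hL : L.IsHermitian) {K : ℕ} {lam : Fin K → ℝ} {mult : Fin K → ℕ}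
    (hS : IsSpectrum L K lam mult) :
    ∃ v : (j : Fin K) → Fin (mult j) → Fin n → ℝ,
      (∀ j, IsOrthonormalEigenbasis L (lam j) (v j)) ∧
      ∀ w : Fin n → ℝ, w ∈ Submodule.span ℝ (⋃ j, Set.range (v j)) := by
  classical
  obtain ⟨h1, h2, h3, h4⟩ := hS
  have hcard : ∀ j, Fintype.card {i // hL.eigenvalues i = lam j} = mult j := by
    intro j
    rw [Fintype.card_subtype, ← hermB_finrank hL (lam j), h3 j]
  let e : ∀ j, Fin (mult j) ≃ {i // hL.eigenvalues i = lam j} :=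
    fun j => (Fintype.equivFinOfCardEq (hcard j)).symm
  have hrange : ∀ j, Set.range (fun c => hermB hL ((e j c : Fin n)))
      = hermB hL '' {i | hL.eigenvalues i = lam j} := by
    intro j
    ext y
    constructor
    · rintro ⟨c, rfl⟩
      exact ⟨(e j c : Fin n), (e j c).2, rfl⟩
    · rintro ⟨i, hi, rfl⟩
      exact ⟨(e j).symm ⟨i, hi⟩, by simp⟩
  refine ⟨fun j c => hermB hL ((e j c : Fin n)), fun j => ⟨?_, ?_, ?_⟩, ?_⟩
  · intro c
    rw [hermB_mulVec, (e j c).2]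
  · intro c d
    rw [hermB_dot]
    exact if_congr ⟨fun h => (e j).injective (Subtype.coe_injective h),
      fun h => by rw [h]⟩ rfl rfl
  · rw [hrange j, hermB_span_group]
  · intro w
    rw [← (hermB hL).sum_repr w]
    refine Submodule.sum_smul_mem _ _ fun i _ => Submodule.subset_span ?_
    have hev : Module.End.HasEigenvalue (mulVecLin L) (hL.eigenvalues i) :=
      (herm_hasEigenvalue_iff hL _).mpr ⟨i, rfl⟩
    obtain ⟨j, hj⟩ := h4 _ hev
    exact Set.mem_iUnion.mpr ⟨j, ⟨(e j).symm ⟨i, hj.symm⟩, by simp⟩⟩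


lemma degree_eq_sum {G : SimpleGraph (Fin n)} [DecidableRel G.Adj] (i : Fin n) :
    (G.degree i : ℝ) = ∑ j, G.adjMatrix ℝ i j := by
  have h := SimpleGraph.adjMatrix_mulVec_const_apply (G := G) (α := ℝ) (a := 1) (v := i)
  simpa [Matrix.mulVec, dotProduct, Function.const] using h.symm

lemma lapMatrix_apply_eq {G : SimpleGraph (Fin n)} [DecidableRel G.Adj] (i j : Fin n) :
    G.lapMatrix ℝ i j = (if i = j then (G.degree i : ℝ) else 0) - G.adjMatrix ℝ i j := by
  simp [SimpleGraph.lapMatrix, SimpleGraph.degMatrix, Matrix.diagonal_apply, Matrix.sub_apply]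


end StmtAux

open StmtAux Module Module.End Submodule Set in
/-- Equivalence between graph isomorphism (adjacency-matrix permutation
similarity) and spectral data matching: equal spectra and, for every choice of
orthonormal eigenbases, existence of a permutation matrix `P` and orthogonal
matrices `Q_j` with `V_j = P V'_j Q_j`. -/
theorem stmt_0 {n : ℕ} (G H : SimpleGraph (Fin n))
    [DecidableRel G.Adj] [DecidableRel H.Adj] :
    (∃ P : Matrix (Fin n) (Fin n) ℝ, IsPermMatrix P ∧
        G.adjMatrix ℝ = P * H.adjMatrix ℝ * Pᵀ) ↔
      (∃ (K : ℕ) (lam : Fin K → ℝ) (mult : Fin K → ℕ),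
        IsSpectrum (G.lapMatrix ℝ) K lam mult ∧ IsSpectrum (H.lapMatrix ℝ) K lam mult ∧
        ∀ (v v' : (j : Fin K) → Fin (mult j) → Fin n → ℝ),
          (∀ j, IsOrthonormalEigenbasis (G.lapMatrix ℝ) (lam j) (v j)) →
          (∀ j, IsOrthonormalEigenbasis (H.lapMatrix ℝ) (lam j) (v' j)) →
          ∃ P : Matrix (Fin n) (Fin n) ℝ, IsPermMatrix P ∧
            ∀ j, ∃ Q : Matrix (Fin (mult j)) (Fin (mult j)) ℝ, IsOrthMatrix Q ∧
              (Matrix.of fun r c => v j c r) = P * (Matrix.of fun r c => v' j c r) * Q)  := by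
  classical
  have hGher : (G.lapMatrix ℝ).IsHermitian := (SimpleGraph.posSemidef_lapMatrix ℝ G).1
  have hHher : (H.lapMatrix ℝ).IsHermitian := (SimpleGraph.posSemidef_lapMatrix ℝ H).1
  constructor
  · rintro ⟨P, hP, hA⟩
    obtain ⟨σ, hσ⟩ := id hP
    have hPPt := perm_mul_transpose hσ
    have hPtP := perm_transpose_mul hσ
    have hAe : ∀ i j, G.adjMatrix ℝ i j = H.adjMatrix ℝ (σ⁻¹ i) (σ⁻¹ j) := fun i j => by
      rw [hA, conj_entry hσ]
    have hdeg : ∀ i, (G.degree i : ℝ) = (H.degree (σ⁻¹ i) : ℝ) := by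
      intro i
      rw [degree_eq_sum, degree_eq_sum,
        show (∑ j, G.adjMatrix ℝ i j) = ∑ j, H.adjMatrix ℝ (σ⁻¹ i) (σ⁻¹ j) from
          Finset.sum_congr rfl fun j _ => hAe i j]
      exact Fintype.sum_equiv (σ⁻¹ : Equiv.Perm (Fin n)) _ _ (fun j => rfl)
    have hLent : ∀ i j, G.lapMatrix ℝ i j = H.lapMatrix ℝ (σ⁻¹ i) (σ⁻¹ j) := by
      intro i j
      rw [lapMatrix_apply_eq, lapMatrix_apply_eq, hAe]
      by_cases h : i = j
      · subst h; simp [hdeg]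
      · rw [if_neg h, if_neg fun hc => h ((σ⁻¹ : Equiv.Perm (Fin n)).injective hc)]
    have hL : G.lapMatrix ℝ = P * H.lapMatrix ℝ * Pᵀ := by
      ext i j; rw [conj_entry hσ]; exact hLent i j
    obtain ⟨K, lam, mult, hspecG⟩ := exists_isSpectrum hGher
    refine ⟨K, lam, mult, hspecG, isSpectrum_conj hPPt hL hspecG, ?_⟩
    intro v v' hv hv'
    refine ⟨P, hP, fun j => ?_⟩
    set V : Matrix (Fin n) (Fin (mult j)) ℝ := Matrix.of fun r c => v j c r with hVdef
    set V' : Matrix (Fin n) (Fin (mult j)) ℝ := Matrix.of fun r c => v' j c r with hV'def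
    obtain ⟨hv1, hv2, hv3⟩ := hv j
    obtain ⟨hv'1, hv'2, hv'3⟩ := hv' j
    have hcol1 : ∀ c, (fun r => (Pᵀ * V) r c) ∈ Submodule.span ℝ (Set.range (v' j)) := by
      intro c
      rw [col_mul, show (fun s => V s c) = v j c from rfl, hv'3,
        Module.End.mem_eigenspace_iff, mulVecLin_apply]
      exact conj_eigvec hPPt hL (hv1 c)
    have hcol2 : ∀ c, (fun r => (P * V') r c) ∈ Submodule.span ℝ (Set.range (v j)) := by
      intro c
      rw [col_mul, show (fun s => V' s c) = v' j c from rfl, hv3,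
        Module.End.mem_eigenspace_iff, mulVecLin_apply]
      exact conj_eigvec' hPPt hL (hv'1 c)
    have hproj1 : V' * (V'ᵀ * (Pᵀ * V)) = Pᵀ * V := proj_mat_eq_self hv'2 hcol1
    have hproj2 : V * (Vᵀ * (P * V')) = P * V' := proj_mat_eq_self hv2 hcol2
    have hVtV : Vᵀ * V = 1 := transpose_mul_self_eq_one hv2
    have hV'tV' : V'ᵀ * V' = 1 := transpose_mul_self_eq_one hv'2
    refine ⟨V'ᵀ * (Pᵀ * V), ⟨?_, ?_⟩, ?_⟩
    · simp only [Matrix.transpose_mul, Matrix.transpose_transpose, Matrix.mul_assoc]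
      rw [hproj2, ← Matrix.mul_assoc Pᵀ P V', hPtP, Matrix.one_mul, hV'tV']
    · simp only [Matrix.transpose_mul, Matrix.transpose_transpose, Matrix.mul_assoc]
      rw [hproj1, ← Matrix.mul_assoc P Pᵀ V, hPPt, Matrix.one_mul, hVtV]
    · have hfin : P * (V' * (V'ᵀ * (Pᵀ * V))) = V := by
        rw [hproj1, ← Matrix.mul_assoc, hPPt, Matrix.one_mul]
      rw [Matrix.mul_assoc]
      exact hfin.symm
  · rintro ⟨K, lam, mult, hGs, hHs, hmain⟩
    obtain ⟨v, hv, hvspan⟩ := exists_eigenbases hGher hGs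
    obtain ⟨v', hv', -⟩ := exists_eigenbases hHher hHs
    obtain ⟨P, hP, hQ⟩ := hmain v v' hv hv'
    obtain ⟨σ, hσ⟩ := id hP
    have hPPt := perm_mul_transpose hσ
    have hPtP := perm_transpose_mul hσ
    refine ⟨P, hP, ?_⟩
    have hvec : ∀ u ∈ (⋃ j, Set.range (v j)),
        (G.lapMatrix ℝ) *ᵥ u = (P * H.lapMatrix ℝ * Pᵀ) *ᵥ u := by
      rintro u hu
      obtain ⟨j, c, rfl⟩ : ∃ j c, v j c = u := by simpa [Set.mem_iUnion] using hu
      obtain ⟨hv1, hv2, hv3⟩ := hv j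
      obtain ⟨hv'1, hv'2, hv'3⟩ := hv' j
      obtain ⟨Q, hQorth, hQeq⟩ := hQ j
      have hPtV : Pᵀ * (Matrix.of fun r c => v j c r)
          = (Matrix.of fun r c => v' j c r) * Q := by
        rw [hQeq, ← Matrix.mul_assoc, ← Matrix.mul_assoc, hPtP, Matrix.one_mul]
      have h1 : Pᵀ *ᵥ v j c = (Matrix.of fun r c => v' j c r) *ᵥ (fun k => Q k c) := by
        calc Pᵀ *ᵥ v j c
            = (fun r => (Pᵀ * (Matrix.of fun r c => v j c r)) r c) := by
              rw [col_mul]; rfl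
          _ = (fun r => ((Matrix.of fun r c => v' j c r) * Q) r c) := by rw [hPtV]
          _ = (Matrix.of fun r c => v' j c r) *ᵥ (fun k => Q k c) := col_mul _ _ c
      have hu' : Pᵀ *ᵥ v j c ∈ Submodule.span ℝ (Set.range (v' j)) := by
        rw [h1, mulVec_eq_sum_cols]
        exact Submodule.sum_smul_mem _ _ fun k _ => Submodule.subset_span ⟨k, rfl⟩
      have hLu' : (H.lapMatrix ℝ) *ᵥ (Pᵀ *ᵥ v j c) = lam j • (Pᵀ *ᵥ v j c) := by
        rw [hv'3] at hu'
        rw [Module.End.mem_eigenspace_iff, mulVecLin_apply] at hu'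
        exact hu'
      calc G.lapMatrix ℝ *ᵥ v j c = lam j • v j c := hv1 c
        _ = (P * H.lapMatrix ℝ * Pᵀ) *ᵥ v j c := by
            rw [← Matrix.mulVec_mulVec, ← Matrix.mulVec_mulVec, hLu', Matrix.mulVec_smul,
              Matrix.mulVec_mulVec, hPPt, Matrix.one_mulVec]
    have hLmat : G.lapMatrix ℝ = P * H.lapMatrix ℝ * Pᵀ := by
      have hfun : ∀ w, (G.lapMatrix ℝ) *ᵥ w = (P * H.lapMatrix ℝ * Pᵀ) *ᵥ w := by
        intro w
        exact LinearMap.eqOn_span (f := mulVecLin (G.lapMatrix ℝ))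
          (g := mulVecLin (P * H.lapMatrix ℝ * Pᵀ)) (fun u hu => hvec u hu) (hvspan w)
      ext i c
      have h := congrFun (hfun (Pi.single c 1)) i
      simpa [Matrix.mulVec_single] using h
    ext i j
    rw [conj_entry hσ]
    by_cases h : i = j
    · subst h
      simp [SimpleGraph.adjMatrix_apply, SimpleGraph.irrefl]
    · have h' : σ⁻¹ i ≠ σ⁻¹ j := fun hc => h ((σ⁻¹ : Equiv.Perm (Fin n)).injective hc)
      have hLe : G.lapMatrix ℝ i j = H.lapMatrix ℝ (σ⁻¹ i) (σ⁻¹ j) := by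
        rw [hLmat, conj_entry hσ]
      rw [lapMatrix_apply_eq, lapMatrix_apply_eq, if_neg h, if_neg h'] at hLe
      linarith [hLe]
end

section
/- (Davis–Kahan theorem.) Let A and A' be real symmetric n×n matrices. Let λ_1 ≤ … ≤ λ_n be the eigenvalues of A sorted in increasing order (with repeats), and let the columns of the orthogonal matrices V, V' ∈ O(n) be orthonormal eigenvectors of A and A' respectively, sorted in increasing order of their corresponding eigenvalues. Let J = {s, s+1, …, t} ⊆ {1,…,n} be a contiguous interval of indices, set d = min{λ_s − λ_{s−1}, λ_{t+1} − λ_t} (with the conventions λ_0 = −∞ and λ_{n+1} = +∞), and assume d > 0. Let [V]_J and [V']_J denote the n×|J| submatrices formed by columns s through t of V and V'. Then min_{Q ∈ O(|J|)} ‖[V]_J − [V']_J Q‖_F ≤ √8 · min{ √|J| ‖A − A'‖₂, ‖A − A'‖_F } / d. -/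
open Matrix

section DKAux
open Matrix

lemma sum_sq_nonneg {m k : ℕ} (A : Matrix (Fin m) (Fin k) ℝ) :
    0 ≤ ∑ i, ∑ j, (A i j)^2 :=
  Finset.sum_nonneg fun _ _ => Finset.sum_nonneg fun _ _ => sq_nonneg _

lemma frobNorm_sq {m k : ℕ} (A : Matrix (Fin m) (Fin k) ℝ) :
    frobNorm A ^ 2 = ∑ i, ∑ j, (A i j)^2 :=
  Real.sq_sqrt (sum_sq_nonneg A)

lemma frobNorm_nonneg {m k : ℕ} (A : Matrix (Fin m) (Fin k) ℝ) : 0 ≤ frobNorm A :=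
  Real.sqrt_nonneg _

lemma sum_sq_eq_trace {m k : ℕ} (A : Matrix (Fin m) (Fin k) ℝ) :
    ∑ i, ∑ j, (A i j)^2 = Matrix.trace (Aᵀ * A) := by
  simp only [Matrix.trace, Matrix.diag, Matrix.mul_apply, Matrix.transpose_apply, sq]
  rw [Finset.sum_comm]

lemma spec_bound {n : ℕ} (E : Matrix (Fin n) (Fin n) ℝ) (x : Fin n → ℝ) :
    ∑ i, (E.mulVec x i)^2 ≤ specNorm E ^ 2 * ∑ i, (x i)^2 := by
  have key : ∀ y : Fin n → ℝ, Real.sqrt (∑ i, (y i)^2) = ‖(WithLp.equiv 2 (Fin n → ℝ)).symm y‖ := by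
    intro y
    rw [EuclideanSpace.norm_eq]
    congr 1
    refine Finset.sum_congr rfl fun i _ => ?_
    rw [Real.norm_eq_abs, sq_abs]
    rfl
  have h1 : ‖(LinearMap.toContinuousLinearMap (Matrix.toEuclideanLin E))
      ((WithLp.equiv 2 (Fin n → ℝ)).symm x)‖ ≤
      specNorm E * ‖(WithLp.equiv 2 (Fin n → ℝ)).symm x‖ :=
    ContinuousLinearMap.le_opNorm _ _
  have h2 : (LinearMap.toContinuousLinearMap (Matrix.toEuclideanLin E))
      ((WithLp.equiv 2 (Fin n → ℝ)).symm x) = (WithLp.equiv 2 (Fin n → ℝ)).symm (E.mulVec x) := by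
    simp [Matrix.toEuclideanLin_apply]
  rw [h2, ← key, ← key] at h1
  have h3 := mul_self_le_mul_self (Real.sqrt_nonneg (∑ i, (E.mulVec x i)^2)) h1
  calc ∑ i, (E.mulVec x i)^2 = Real.sqrt (∑ i, (E.mulVec x i)^2) * Real.sqrt (∑ i, (E.mulVec x i)^2) := by
        rw [Real.mul_self_sqrt (Finset.sum_nonneg fun _ _ => sq_nonneg _)]
    _ ≤ (specNorm E * Real.sqrt (∑ i, (x i)^2)) * (specNorm E * Real.sqrt (∑ i, (x i)^2)) := h3
    _ = specNorm E ^2 * ∑ i, (x i)^2 := by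
        rw [show (specNorm E * Real.sqrt (∑ i, (x i)^2)) * (specNorm E * Real.sqrt (∑ i, (x i)^2))
          = specNorm E^2 * (Real.sqrt (∑ i, (x i)^2) * Real.sqrt (∑ i, (x i)^2)) by ring,
          Real.mul_self_sqrt (Finset.sum_nonneg fun _ _ => sq_nonneg _)]

lemma specNorm_nonneg {m k : ℕ} (A : Matrix (Fin m) (Fin k) ℝ) : 0 ≤ specNorm A := norm_nonneg _

lemma specNorm_sub_symm {n : ℕ} (A B : Matrix (Fin n) (Fin n) ℝ) :
    specNorm (A - B) = specNorm (B - A) := by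
  unfold specNorm
  rw [show B - A = -(A - B) from (neg_sub A B).symm, map_neg, map_neg, norm_neg]

lemma dot_smul_sum {N m : ℕ} (v : Fin m → Fin N → ℝ) (u : Fin N → ℝ) (w : Fin m → ℝ) :
    dotProduct u (∑ i, w i • v i) = ∑ i, w i * dotProduct u (v i) := by
  simp only [dotProduct, Finset.sum_apply, Pi.smul_apply, smul_eq_mul, Finset.mul_sum]
  rw [Finset.sum_comm]
  refine Finset.sum_congr rfl fun i _ => ?_
  refine Finset.sum_congr rfl fun j _ => ?_
  ring

lemma dot_sum_sum_ortho {N m : ℕ} (v : Fin m → Fin N → ℝ)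
    (h : ∀ i j, dotProduct (v i) (v j) = if i = j then 1 else 0) (w w' : Fin m → ℝ) :
    dotProduct (∑ i, w i • v i) (∑ i, w' i • v i) = ∑ i, w i * w' i := by
  rw [dotProduct_comm, dot_smul_sum]
  refine Finset.sum_congr rfl fun i _ => ?_
  rw [dotProduct_comm, dot_smul_sum]
  rw [Finset.sum_eq_single i]
  · rw [h i i]; simp [mul_comm]
  · intro b _ hb; rw [h i b, if_neg fun hc => hb hc.symm]; ring
  · intro hj; exact absurd (Finset.mem_univ i) hj

lemma li_of_ortho {N m : ℕ} (v : Fin m → Fin N → ℝ)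
    (h : ∀ i j, dotProduct (v i) (v j) = if i = j then 1 else 0) : LinearIndependent ℝ v := by
  rw [Fintype.linearIndependent_iff]
  intro g hg j
  have h1 : dotProduct (v j) (∑ i, g i • v i) = g j := by
    rw [dot_smul_sum]
    rw [Finset.sum_eq_single j]
    · rw [h j j]; simp
    · intro b _ hb; rw [h j b, if_neg (Ne.symm hb)]; ring
    · intro hj; exact absurd (Finset.mem_univ j) hj
  rw [hg] at h1
  simp [dotProduct] at h1
  exact h1.symm

lemma weyl_le {n : ℕ} (A A' : Matrix (Fin n) (Fin n) ℝ)
    (lam lam' : Fin n → ℝ) (V V' : Fin n → Fin n → ℝ)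
    (hmono : Monotone lam)
    (heig : ∀ i, A.mulVec (V i) = lam i • V i)
    (hortho : ∀ i j, dotProduct (V i) (V j) = if i = j then 1 else 0)
    (hmono' : Monotone lam')
    (heig' : ∀ i, A'.mulVec (V' i) = lam' i • V' i)
    (hortho' : ∀ i j, dotProduct (V' i) (V' j) = if i = j then 1 else 0)
    (k : Fin n) : lam' k ≤ lam k + specNorm (A - A') := by
  have hkn := k.isLt
  set a := k.val with ha
  -- families
  set u : Fin (a+1) → Fin n → ℝ := fun j => V ⟨j.val, by omega⟩ with hu
  set z : Fin (n-a) → Fin n → ℝ := fun j => V' ⟨a + j.val, by omega⟩ with hz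
  have hu_ortho : ∀ i j, dotProduct (u i) (u j) = if i = j then 1 else 0 := by
    intro i j
    rw [hortho]
    by_cases hij : i = j
    · subst hij; simp
    · rw [if_neg hij, if_neg]; intro hc; apply hij; apply Fin.ext
      have := congrArg Fin.val hc; simpa using this
  have hz_ortho : ∀ i j, dotProduct (z i) (z j) = if i = j then 1 else 0 := by
    intro i j
    rw [hortho']
    by_cases hij : i = j
    · subst hij; simp
    · rw [if_neg hij, if_neg]; intro hc; apply hij; apply Fin.ext
      have := congrArg Fin.val hc; simpa using this
  set S₁ : Submodule ℝ (Fin n → ℝ) := Submodule.span ℝ (Set.range u) with hS₁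
  set S₂ : Submodule ℝ (Fin n → ℝ) := Submodule.span ℝ (Set.range z) with hS₂
  have hr₁ : Module.finrank ℝ S₁ = a + 1 := by
    rw [hS₁, finrank_span_eq_card (li_of_ortho u hu_ortho)]
    simp
  have hr₂ : Module.finrank ℝ S₂ = n - a := by
    rw [hS₂, finrank_span_eq_card (li_of_ortho z hz_ortho)]
    simp
  have hinf : S₁ ⊓ S₂ ≠ ⊥ := by
    intro hbot
    have hsum := Submodule.finrank_sup_add_finrank_inf_eq S₁ S₂
    rw [hbot] at hsum
    simp only [finrank_bot, add_zero] at hsum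
    have hle : Module.finrank ℝ ↥(S₁ ⊔ S₂) ≤ n := by
      have := Submodule.finrank_le (S₁ ⊔ S₂)
      simpa [Module.finrank_pi] using this
    omega
  obtain ⟨x, hx, hx0⟩ := Submodule.exists_mem_ne_zero_of_ne_bot hinf
  obtain ⟨c, hc⟩ := (Submodule.mem_span_range_iff_exists_fun ℝ).mp (hx.1 : x ∈ S₁)
  obtain ⟨e, he⟩ := (Submodule.mem_span_range_iff_exists_fun ℝ).mp (hx.2 : x ∈ S₂)
  -- norm of x
  have hxx_c : dotProduct x x = ∑ i, (c i)^2 := by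
    rw [← hc, dot_sum_sum_ortho u hu_ortho c c]
    exact Finset.sum_congr rfl fun i _ => (sq (c i)).symm
  have hxx_e : dotProduct x x = ∑ i, (e i)^2 := by
    rw [← he, dot_sum_sum_ortho z hz_ortho e e]
    exact Finset.sum_congr rfl fun i _ => (sq (e i)).symm
  have hxx_nonneg : 0 ≤ dotProduct x x := by
    rw [hxx_c]; positivity
  have hxxpos : 0 < dotProduct x x :=
    lt_of_le_of_ne hxx_nonneg (Ne.symm fun h => hx0 (dotProduct_self_eq_zero.mp h))
  -- quadratic form bounds
  have hAx : A.mulVec x = ∑ i, (c i * lam ⟨i.val, by omega⟩) • u i := by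
    rw [← hc]
    have hms : (Matrix.mulVecLin A) (∑ i, c i • u i) = ∑ i, (Matrix.mulVecLin A) (c i • u i) :=
      map_sum (Matrix.mulVecLin A) _ _
    simp only [Matrix.mulVecLin_apply] at hms
    rw [hms]
    refine Finset.sum_congr rfl fun i _ => ?_
    rw [Matrix.mulVec_smul, hu]
    simp only
    rw [heig, smul_smul]
  have hA'x : A'.mulVec x = ∑ i, (e i * lam' ⟨a + i.val, by omega⟩) • z i := by
    rw [← he]
    have hms : (Matrix.mulVecLin A') (∑ i, e i • z i) = ∑ i, (Matrix.mulVecLin A') (e i • z i) :=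
      map_sum (Matrix.mulVecLin A') _ _
    simp only [Matrix.mulVecLin_apply] at hms
    rw [hms]
    refine Finset.sum_congr rfl fun i _ => ?_
    rw [Matrix.mulVec_smul, hz]
    simp only
    rw [heig', smul_smul]
  have hqA : dotProduct x (A.mulVec x) ≤ lam k * dotProduct x x := by
    rw [hAx]
    nth_rewrite 1 [← hc]
    rw [dot_sum_sum_ortho u hu_ortho, hxx_c, Finset.mul_sum]
    refine Finset.sum_le_sum fun i _ => ?_
    have hle : lam ⟨i.val, by omega⟩ ≤ lam k := by
      apply hmono; rw [Fin.le_def]; simpa using Fin.is_le i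
    calc c i * (c i * lam ⟨i.val, by omega⟩) = lam ⟨i.val, by omega⟩ * (c i)^2 := by ring
      _ ≤ lam k * (c i)^2 := mul_le_mul_of_nonneg_right hle (sq_nonneg _)
  have hqA' : lam' k * dotProduct x x ≤ dotProduct x (A'.mulVec x) := by
    rw [hA'x]
    nth_rewrite 3 [← he]
    rw [dot_sum_sum_ortho z hz_ortho, hxx_e, Finset.mul_sum]
    refine Finset.sum_le_sum fun i _ => ?_
    have hle : lam' k ≤ lam' ⟨a + i.val, by omega⟩ := by
      apply hmono'; rw [Fin.le_def]; simp [ha]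
    calc lam' k * (e i)^2 ≤ lam' ⟨a + i.val, by omega⟩ * (e i)^2 :=
        mul_le_mul_of_nonneg_right hle (sq_nonneg _)
      _ = e i * (e i * lam' ⟨a + i.val, by omega⟩) := by ring
  -- Cauchy-Schwarz on E
  set E := A - A' with hE
  have hsplit : dotProduct x (E.mulVec x) =
      dotProduct x (A.mulVec x) - dotProduct x (A'.mulVec x) := by
    rw [hE, Matrix.sub_mulVec]
    exact dotProduct_sub x _ _
  have hcs : (dotProduct x (E.mulVec x))^2 ≤ (specNorm E * dotProduct x x)^2 := by
    have h1 := Finset.sum_mul_sq_le_sq_mul_sq Finset.univ x (E.mulVec x)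
    have h2 := spec_bound E x
    have hxx2 : ∑ i, (x i)^2 = dotProduct x x := by
      exact Finset.sum_congr rfl fun i _ => sq (x i)
    calc (dotProduct x (E.mulVec x))^2 ≤ (∑ i, (x i)^2) * ∑ i, (E.mulVec x i)^2 := h1
      _ ≤ (∑ i, (x i)^2) * (specNorm E ^2 * ∑ i, (x i)^2) := by
          apply mul_le_mul_of_nonneg_left h2
          positivity
      _ = (specNorm E * dotProduct x x)^2 := by rw [hxx2]; ring
  have habs : |dotProduct x (E.mulVec x)| ≤ specNorm E * dotProduct x x :=
    abs_le_of_sq_le_sq hcs (mul_nonneg (specNorm_nonneg E) hxx_nonneg)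
  have hfin : lam' k * dotProduct x x ≤ (lam k + specNorm (A - A')) * dotProduct x x := by
    have h3 := neg_le_of_abs_le habs
    calc lam' k * dotProduct x x ≤ dotProduct x (A'.mulVec x) := hqA'
      _ = dotProduct x (A.mulVec x) - dotProduct x (E.mulVec x) := by rw [hsplit]; ring
      _ ≤ lam k * dotProduct x x + specNorm E * dotProduct x x := by linarith
      _ = (lam k + specNorm (A - A')) * dotProduct x x := by rw [hE]; ring
  exact le_of_mul_le_mul_right hfin hxxpos

lemma polar_lemma {p : ℕ} (M : Matrix (Fin p) (Fin p) ℝ)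
    (hcontr : ∀ x : Fin p → ℝ, dotProduct (M.mulVec x) (M.mulVec x) ≤ dotProduct x x) :
    ∃ Q : Matrix (Fin p) (Fin p) ℝ, IsOrthMatrix Q ∧
      Matrix.trace (Mᵀ * M) ≤ Matrix.trace (Qᵀ * M) := by
  classical
  have hH : (Mᵀ * M).IsHermitian := by
    have := Matrix.isHermitian_conjTranspose_mul_self M
    rwa [Matrix.conjTranspose_eq_transpose_of_trivial] at this
  set H := Mᵀ * M with hHdef
  set R : Matrix (Fin p) (Fin p) ℝ := (hH.eigenvectorUnitary : Matrix (Fin p) (Fin p) ℝ) with hR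
  have hRmem := (hH.eigenvectorUnitary).2
  rw [Matrix.mem_unitaryGroup_iff] at hRmem
  -- hRmem : R * star R = 1
  have hstar : star R = Rᵀ := by
    rw [Matrix.star_eq_conjTranspose, Matrix.conjTranspose_eq_transpose_of_trivial]
  have hRR : R * Rᵀ = 1 := hstar ▸ hRmem
  have hRtR : Rᵀ * R = 1 := mul_eq_one_comm.mp hRR
  set d : Fin p → ℝ := hH.eigenvalues with hd
  have hspec : H = R * Matrix.diagonal d * Rᵀ := by
    rw [← hstar]
    have := hH.spectral_theorem
    rwa [show RCLike.ofReal ∘ hH.eigenvalues = d by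
      rw [RCLike.ofReal_real_eq_id]; rfl] at this
  have hHR : H * R = R * Matrix.diagonal d := by
    rw [hspec, Matrix.mul_assoc, Matrix.mul_assoc, hRtR, Matrix.mul_one]
  -- columns of R
  set r : Fin p → Fin p → ℝ := fun i j => R j i with hr
  have hcol : ∀ i, H.mulVec (r i) = d i • (r i) := by
    intro i
    funext j
    have h1 : (H * R) j i = (R * Matrix.diagonal d) j i := by rw [hHR]
    rw [Matrix.mul_apply, Matrix.mul_apply] at h1
    have h2 : ∑ k, H j k * R k i = H.mulVec (r i) j := by
      rw [Matrix.mulVec, dotProduct]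
    have h3 : ∑ k, R j k * Matrix.diagonal d k i = d i * R j i := by
      rw [Finset.sum_eq_single i]
      · rw [Matrix.diagonal_apply_eq]; ring
      · intro b _ hb; rw [Matrix.diagonal_apply_ne _ hb]; ring
      · intro hi; exact absurd (Finset.mem_univ i) hi
    rw [h2, h3] at h1
    rw [h1]; rfl
  have hrdot : ∀ i j, dotProduct (r i) (r j) = if i = j then 1 else 0 := by
    intro i j
    have h1 : (Rᵀ * R) i j = (1 : Matrix (Fin p) (Fin p) ℝ) i j := by rw [hRtR]
    rw [Matrix.mul_apply] at h1
    simp only [Matrix.transpose_apply] at h1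
    rw [Matrix.one_apply] at h1
    rw [dotProduct]
    exact h1
  have hMr : ∀ i j, dotProduct (M.mulVec (r i)) (M.mulVec (r j)) = if i = j then d j else 0 := by
    intro i j
    have h1 : dotProduct (M.mulVec (r i)) (M.mulVec (r j))
        = dotProduct (r i) (H.mulVec (r j)) := by
      rw [hHdef, ← Matrix.mulVec_mulVec, Matrix.dotProduct_mulVec (r i) Mᵀ,
        Matrix.vecMul_transpose]
    rw [h1, hcol j, dotProduct_smul, hrdot i j]
    by_cases hij : i = j <;> simp [hij, smul_eq_mul]
  have hd01 : ∀ i, 0 ≤ d i ∧ d i ≤ 1 := by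
    intro i
    have h1 := hMr i i
    rw [if_pos rfl] at h1
    constructor
    · rw [← h1, dotProduct]; exact Finset.sum_nonneg fun _ _ => mul_self_nonneg _
    · rw [← h1]
      calc dotProduct (M.mulVec (r i)) (M.mulVec (r i)) ≤ dotProduct (r i) (r i) := hcontr _
        _ = 1 := by rw [hrdot i i, if_pos rfl]
  -- orthonormal family
  set T : Set (Fin p) := {i | d i ≠ 0} with hT
  set v : Fin p → EuclideanSpace ℝ (Fin p) :=
    fun i => if d i ≠ 0 then (WithLp.equiv 2 (Fin p → ℝ)).symm
      ((Real.sqrt (d i))⁻¹ • (M.mulVec (r i))) else 0 with hv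
  have hvT : ∀ i ∈ T, ∀ k, v i k = (Real.sqrt (d i))⁻¹ * (M.mulVec (r i) k) := by
    intro i hi k
    rw [hv]
    simp only []
    rw [if_pos (show d i ≠ 0 from hi)]
    rfl
  have hon : Orthonormal ℝ (T.restrict v) := by
    rw [orthonormal_iff_ite]
    intro i j
    have hi : (i : Fin p) ∈ T := i.2
    have hj : (j : Fin p) ∈ T := j.2
    have hinner : (inner ℝ (T.restrict v i) (T.restrict v j) : ℝ)
        = ∑ k, v i k * v j k := by
      rw [PiLp.inner_apply]
      simp [Set.restrict, mul_comm]
    rw [hinner]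
    have : ∑ k, v i k * v j k
        = (Real.sqrt (d i))⁻¹ * (Real.sqrt (d j))⁻¹ * dotProduct (M.mulVec (r i)) (M.mulVec (r j)) := by
      rw [dotProduct, Finset.mul_sum]
      refine Finset.sum_congr rfl fun k _ => ?_
      rw [hvT i hi k, hvT j hj k]
      ring
    rw [this, hMr]
    by_cases hij : (i : Fin p) = (j : Fin p)
    · have hij' : i = j := Subtype.ext hij
      subst hij'
      rw [if_pos rfl, if_pos rfl]
      have hdj : 0 < d (i : Fin p) := lt_of_le_of_ne (hd01 _).1 (Ne.symm hi)
      rw [← mul_inv, Real.mul_self_sqrt (le_of_lt hdj)]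
      exact inv_mul_cancel₀ (ne_of_gt hdj)
    · rw [if_neg hij, if_neg (fun hc => hij (congrArg Subtype.val hc))]
      ring
  obtain ⟨b, hb⟩ := hon.exists_orthonormalBasis_extension_of_card_eq
    (by simp [finrank_euclideanSpace_fin])
  -- matrix P with columns b i
  set P : Matrix (Fin p) (Fin p) ℝ := Matrix.of (fun k i => b i k) with hP
  have hPtP : Pᵀ * P = 1 := by
    ext i j
    rw [Matrix.mul_apply, Matrix.one_apply]
    have := (orthonormal_iff_ite.mp b.orthonormal) i j
    rw [PiLp.inner_apply] at this
    simp only [RCLike.inner_apply, starRingEnd_apply, star_trivial] at this ⊢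
    simpa [hP, mul_comm] using this
  have hPPt : P * Pᵀ = 1 := mul_eq_one_comm.mp hPtP
  refine ⟨P * Rᵀ, ⟨?_, ?_⟩, ?_⟩
  · rw [Matrix.transpose_mul, Matrix.transpose_transpose, Matrix.mul_assoc,
      ← Matrix.mul_assoc Rᵀ R Pᵀ, hRtR, Matrix.one_mul, hPPt]
  · rw [Matrix.transpose_mul, Matrix.transpose_transpose, Matrix.mul_assoc,
      ← Matrix.mul_assoc Pᵀ P Rᵀ, hPtP, Matrix.one_mul, hRR]
  · -- trace computation
    have htr1 : Matrix.trace (Mᵀ * M) = ∑ i, d i := by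
      rw [← hHdef, hspec, Matrix.trace_mul_cycle, hRtR, Matrix.one_mul, Matrix.trace_diagonal]
    have htr2 : Matrix.trace ((P * Rᵀ)ᵀ * M)
        = ∑ i, dotProduct (fun k => P k i) (M.mulVec (r i)) := by
      rw [Matrix.transpose_mul, Matrix.transpose_transpose, Matrix.mul_assoc R Pᵀ M,
        Matrix.trace_mul_comm R (Pᵀ * M), Matrix.mul_assoc Pᵀ M R]
      rw [Matrix.trace]
      refine Finset.sum_congr rfl fun i _ => ?_
      rw [Matrix.diag_apply, Matrix.mul_apply, dotProduct]
      refine Finset.sum_congr rfl fun k _ => ?_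
      rw [Matrix.transpose_apply, Matrix.mul_apply, Matrix.mulVec, dotProduct]
    rw [htr1, htr2]
    refine Finset.sum_le_sum fun i _ => ?_
    by_cases hi : d i ≠ 0
    · have hdi : 0 < d i := lt_of_le_of_ne (hd01 i).1 (Ne.symm hi)
      have hsqpos : 0 < Real.sqrt (d i) := Real.sqrt_pos.mpr hdi
      have hself : Real.sqrt (d i) * Real.sqrt (d i) = d i := Real.mul_self_sqrt hdi.le
      have hPb : ∀ k, P k i = (Real.sqrt (d i))⁻¹ * (M.mulVec (r i) k) := by
        intro k
        rw [hP]
        show b i k = _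
        rw [hb i hi]
        exact hvT i hi k
      have hstep : dotProduct (fun k => P k i) (M.mulVec (r i))
          = (Real.sqrt (d i))⁻¹ * dotProduct (M.mulVec (r i)) (M.mulVec (r i)) := by
        rw [dotProduct, dotProduct, Finset.mul_sum]
        refine Finset.sum_congr rfl fun k _ => ?_
        rw [hPb k]; ring
      have hMri := hMr i i
      rw [if_pos rfl] at hMri
      rw [hstep, hMri]
      have h1 : (Real.sqrt (d i))⁻¹ * d i = Real.sqrt (d i) := by
        rw [inv_mul_eq_div, div_eq_iff (ne_of_gt hsqpos)]
        linarith [hself]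
      rw [h1]
      calc d i = Real.sqrt (d i) * Real.sqrt (d i) := hself.symm
        _ ≤ Real.sqrt (d i) * 1 := by
            apply mul_le_mul_of_nonneg_left _ hsqpos.le
            rw [show (1:ℝ) = Real.sqrt 1 by simp]
            exact Real.sqrt_le_sqrt (hd01 i).2
        _ = Real.sqrt (d i) := mul_one _
    · push_neg at hi
      have hMri0 : M.mulVec (r i) = 0 := by
        have := hMr i i
        rw [if_pos rfl, hi] at this
        exact dotProduct_self_eq_zero.mp this
      rw [hMri0, hi]
      simp

lemma comb_bound {n : ℕ} (lam lam' : Fin n → ℝ) (c : Fin n → Fin n → ℝ)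
    (w : Fin n → Fin n → ℝ)
    (hw : ∀ i k, w i k = (lam k - lam' i)^2)
    (hc : ∀ i k, 0 ≤ c i k)
    (hrow : ∀ i, ∑ k, c i k = 1) (hcol : ∀ k, ∑ i, c i k = 1)
    (hmono : Monotone lam) (hmono' : Monotone lam')
    (s t : Fin n) (hst : s ≤ t) (d : ℝ) (hd : 0 < d)
    (hgap1 : ∀ _ : 0 < s.val,
      d ≤ lam s - lam ⟨s.val - 1, lt_of_le_of_lt (Nat.sub_le _ _) s.isLt⟩)
    (hgap2 : ∀ ht : t.val + 1 < n, d ≤ lam ⟨t.val + 1, ht⟩ - lam t) :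
    ∑ i ∈ Finset.filter (fun i => ¬(s ≤ i ∧ i ≤ t)) Finset.univ,
      ∑ k ∈ Finset.filter (fun k => s ≤ k ∧ k ≤ t) Finset.univ, c i k
    ≤ (4/d^2) * ∑ i, ∑ k, w i k * c i k := by
  classical
  set JF := Finset.filter (fun k : Fin n => s ≤ k ∧ k ≤ t) Finset.univ with hJF
  have hwnn : ∀ i k, 0 ≤ w i k := fun i k => (hw i k) ▸ sq_nonneg _
  have hwcnn : ∀ i k, 0 ≤ w i k * c i k := fun i k => mul_nonneg (hwnn i k) (hc i k)
  have hdinv : (0:ℝ) < 4/d^2 := by positivity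
  -- generic facts
  have hrowJ : ∀ i, ∑ k ∈ JF, c i k ≤ 1 := by
    intro i
    rw [← hrow i]
    exact Finset.sum_le_sum_of_subset_of_nonneg (Finset.subset_univ _)
      (fun k _ _ => hc i k)
  -- entrywise bound generator
  have hentry : ∀ (i k : Fin n), d/2 ≤ |lam k - lam' i| → c i k ≤ (4/d^2) * (w i k * c i k) := by
    intro i k hik
    have h1 : d^2/4 ≤ w i k := by
      rw [hw]
      calc d^2/4 = (d/2)^2 := by ring
        _ ≤ |lam k - lam' i|^2 := pow_le_pow_left₀ (by linarith) hik 2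
        _ = (lam k - lam' i)^2 := sq_abs _
    have heq1 : (4/d^2) * (d^2/4) = 1 := by
      field_simp
    calc c i k = ((4/d^2) * (d^2/4)) * c i k := by rw [heq1, one_mul]
      _ = (4/d^2) * (d^2/4 * c i k) := by ring
      _ ≤ (4/d^2) * (w i k * c i k) := by
          apply mul_le_mul_of_nonneg_left _ hdinv.le
          exact mul_le_mul_of_nonneg_right h1 (hc i k)
  -- subsets
  set BadLo := Finset.filter (fun i : Fin n => i < s ∧ lam s - d/2 < lam' i) Finset.univ with hBadLo
  set GoodLo := Finset.filter (fun i : Fin n => i < s ∧ ¬(lam s - d/2 < lam' i)) Finset.univ with hGoodLo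
  set BadHi := Finset.filter (fun i : Fin n => t < i ∧ lam' i < lam t + d/2) Finset.univ with hBadHi
  set GoodHi := Finset.filter (fun i : Fin n => t < i ∧ ¬(lam' i < lam t + d/2)) Finset.univ with hGoodHi
  set NearLo := Finset.filter (fun i : Fin n => lam s - d/2 < lam' i) Finset.univ with hNearLo
  set NearHi := Finset.filter (fun i : Fin n => lam' i < lam t + d/2) Finset.univ with hNearHi
  -- gap facts for columns
  have hlamLo : ∀ k : Fin n, k < s → lam k ≤ lam s - d := by
    intro k hk
    have hs0 : 0 < s.val := lt_of_le_of_lt (Nat.zero_le _) hk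
    have h1 := hgap1 hs0
    have h2 : lam k ≤ lam ⟨s.val - 1, lt_of_le_of_lt (Nat.sub_le _ _) s.isLt⟩ := by
      apply hmono
      rw [Fin.le_def]
      simp only
      omega
    linarith
  have hlamHi : ∀ k : Fin n, t < k → lam t + d ≤ lam k := by
    intro k hk
    have ht1 : t.val + 1 < n := by
      have := k.isLt
      have : t.val < k.val := hk
      omega
    have h1 := hgap2 ht1
    have h2 : lam ⟨t.val + 1, ht1⟩ ≤ lam k := by
      apply hmono
      rw [Fin.le_def]
      simp only
      omega
    linarith
  have hlamJlo : ∀ k : Fin n, k ∈ JF → lam s ≤ lam k := by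
    intro k hk
    rw [hJF, Finset.mem_filter] at hk
    exact hmono hk.2.1
  have hlamJhi : ∀ k : Fin n, k ∈ JF → lam k ≤ lam t := by
    intro k hk
    rw [hJF, Finset.mem_filter] at hk
    exact hmono hk.2.2
  -- The four partial bounds
  have hGoodLoBound : ∑ i ∈ GoodLo, ∑ k ∈ JF, c i k
      ≤ (4/d^2) * ∑ i ∈ GoodLo, ∑ k ∈ JF, w i k * c i k := by
    rw [Finset.mul_sum]
    refine Finset.sum_le_sum fun i hi => ?_
    rw [Finset.mul_sum]
    refine Finset.sum_le_sum fun k hk => ?_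
    have hi' := (Finset.mem_filter.mp hi).2
    apply hentry
    have h1 : lam s ≤ lam k := hlamJlo k hk
    have h2 : lam' i ≤ lam s - d/2 := not_lt.mp hi'.2
    rw [abs_of_nonneg (by linarith)]
    linarith
  have hGoodHiBound : ∑ i ∈ GoodHi, ∑ k ∈ JF, c i k
      ≤ (4/d^2) * ∑ i ∈ GoodHi, ∑ k ∈ JF, w i k * c i k := by
    rw [Finset.mul_sum]
    refine Finset.sum_le_sum fun i hi => ?_
    rw [Finset.mul_sum]
    refine Finset.sum_le_sum fun k hk => ?_
    have hi' := (Finset.mem_filter.mp hi).2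
    apply hentry
    have h1 : lam k ≤ lam t := hlamJhi k hk
    have h2 : lam t + d/2 ≤ lam' i := not_lt.mp hi'.2
    rw [abs_of_nonpos (by linarith)]
    linarith
  have hBadLoBound : ∑ i ∈ BadLo, ∑ k ∈ JF, c i k
      ≤ (4/d^2) * ∑ k ∈ Finset.Iio s, ∑ i ∈ NearLo, w i k * c i k := by
    by_cases hBL : BadLo.Nonempty
    · set i₀ := BadLo.min' hBL with hi₀
      have hi₀mem : i₀ < s ∧ lam s - d/2 < lam' i₀ :=
        (Finset.mem_filter.mp (BadLo.min'_mem hBL)).2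
      have hstep1 : ∑ i ∈ BadLo, ∑ k ∈ JF, c i k ≤ ((s.val - i₀.val : ℕ) : ℝ) := by
        have hsub : BadLo ⊆ Finset.Ico i₀ s := by
          intro i hi
          rw [Finset.mem_Ico]
          refine ⟨Finset.min'_le _ _ hi, ?_⟩
          exact (Finset.mem_filter.mp hi).2.1
        calc ∑ i ∈ BadLo, ∑ k ∈ JF, c i k ≤ ∑ i ∈ Finset.Ico i₀ s, ∑ k ∈ JF, c i k :=
              Finset.sum_le_sum_of_subset_of_nonneg hsub
                (fun i _ _ => Finset.sum_nonneg fun k _ => hc i k)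
          _ ≤ ∑ i ∈ Finset.Ico i₀ s, 1 := Finset.sum_le_sum fun i _ => hrowJ i
          _ = ((s.val - i₀.val : ℕ) : ℝ) := by
              rw [Finset.sum_const, Fin.card_Ico]
              simp
      have hstep2 : ((s.val - i₀.val : ℕ) : ℝ) ≤ ∑ k ∈ Finset.Iio s, ∑ i ∈ NearLo, c i k := by
        have hsplit : ∀ k, ∑ i ∈ NearLo, c i k
            = 1 - ∑ i ∈ Finset.filter (fun i => ¬(lam s - d/2 < lam' i)) Finset.univ, c i k := by
          intro k
          have := Finset.sum_filter_add_sum_filter_not Finset.univ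
            (fun i : Fin n => lam s - d/2 < lam' i) (fun i => c i k)
          rw [hcol k] at this
          rw [hNearLo]
          linarith
        have hcompsub : Finset.filter (fun i : Fin n => ¬(lam s - d/2 < lam' i)) Finset.univ
            ⊆ Finset.Iio i₀ := by
          intro i hi
          rw [Finset.mem_filter, not_lt] at hi
          rw [Finset.mem_Iio]
          by_contra hcon
          rw [not_lt] at hcon
          have := hmono' hcon
          linarith [hi₀mem.2]
        -- bound: ∑_{k∈Iio s} ∑_{i∈comp} c i k ≤ card comp ≤ i₀
        have hbound2 : ∑ k ∈ Finset.Iio s,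
            ∑ i ∈ Finset.filter (fun i : Fin n => ¬(lam s - d/2 < lam' i)) Finset.univ, c i k
            ≤ (i₀.val : ℝ) := by
          rw [Finset.sum_comm]
          calc ∑ i ∈ Finset.filter (fun i : Fin n => ¬(lam s - d/2 < lam' i)) Finset.univ,
                ∑ k ∈ Finset.Iio s, c i k
              ≤ ∑ i ∈ Finset.filter (fun i : Fin n => ¬(lam s - d/2 < lam' i)) Finset.univ, 1 := by
                refine Finset.sum_le_sum fun i _ => ?_
                rw [← hrow i]
                exact Finset.sum_le_sum_of_subset_of_nonneg (Finset.subset_univ _)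
                  (fun k _ _ => hc i k)
            _ ≤ ∑ i ∈ Finset.Iio i₀, (1:ℝ) := by
                apply Finset.sum_le_sum_of_subset_of_nonneg hcompsub
                intro i _ _; norm_num
            _ = (i₀.val : ℝ) := by rw [Finset.sum_const, Fin.card_Iio]; simp
        have hIio : (Finset.Iio s).card = s.val := Fin.card_Iio s
        calc ((s.val - i₀.val : ℕ) : ℝ)
            ≤ (s.val : ℝ) - (i₀.val : ℝ) := by
              rw [Nat.cast_sub (le_of_lt hi₀mem.1)]
          _ ≤ ∑ k ∈ Finset.Iio s, (1:ℝ) - ∑ k ∈ Finset.Iio s,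
              ∑ i ∈ Finset.filter (fun i : Fin n => ¬(lam s - d/2 < lam' i)) Finset.univ, c i k := by
              rw [Finset.sum_const, hIio]
              simp only [nsmul_eq_mul, mul_one]
              linarith [hbound2]
          _ = ∑ k ∈ Finset.Iio s, (1 - ∑ i ∈ Finset.filter
              (fun i : Fin n => ¬(lam s - d/2 < lam' i)) Finset.univ, c i k) := by
              rw [Finset.sum_sub_distrib]
          _ = ∑ k ∈ Finset.Iio s, ∑ i ∈ NearLo, c i k := by
              refine Finset.sum_congr rfl fun k _ => ?_
              rw [hsplit k]
      have hstep3 : ∑ k ∈ Finset.Iio s, ∑ i ∈ NearLo, c i k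
          ≤ (4/d^2) * ∑ k ∈ Finset.Iio s, ∑ i ∈ NearLo, w i k * c i k := by
        rw [Finset.mul_sum]
        refine Finset.sum_le_sum fun k hk => ?_
        rw [Finset.mul_sum]
        refine Finset.sum_le_sum fun i hi => ?_
        rw [Finset.mem_Iio] at hk
        rw [hNearLo, Finset.mem_filter] at hi
        apply hentry
        have h1 : lam k ≤ lam s - d := hlamLo k hk
        have h2 : lam s - d/2 < lam' i := hi.2
        rw [abs_of_nonpos (by linarith)]
        linarith
      calc ∑ i ∈ BadLo, ∑ k ∈ JF, c i k ≤ ((s.val - i₀.val : ℕ) : ℝ) := hstep1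
        _ ≤ ∑ k ∈ Finset.Iio s, ∑ i ∈ NearLo, c i k := hstep2
        _ ≤ (4/d^2) * ∑ k ∈ Finset.Iio s, ∑ i ∈ NearLo, w i k * c i k := hstep3
    · rw [Finset.not_nonempty_iff_eq_empty] at hBL
      rw [hBL, Finset.sum_empty]
      exact mul_nonneg hdinv.le (Finset.sum_nonneg fun k _ =>
        Finset.sum_nonneg fun i _ => hwcnn i k)
  have hBadHiBound : ∑ i ∈ BadHi, ∑ k ∈ JF, c i k
      ≤ (4/d^2) * ∑ k ∈ Finset.Ioi t, ∑ i ∈ NearHi, w i k * c i k := by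
    by_cases hBH : BadHi.Nonempty
    · set i₁ := BadHi.max' hBH with hi₁
      have hi₁mem : t < i₁ ∧ lam' i₁ < lam t + d/2 :=
        (Finset.mem_filter.mp (BadHi.max'_mem hBH)).2
      have hstep1 : ∑ i ∈ BadHi, ∑ k ∈ JF, c i k ≤ ((i₁.val - t.val : ℕ) : ℝ) := by
        have hsub : BadHi ⊆ Finset.Ioc t i₁ := by
          intro i hi
          rw [Finset.mem_Ioc]
          exact ⟨(Finset.mem_filter.mp hi).2.1, Finset.le_max' _ _ hi⟩
        calc ∑ i ∈ BadHi, ∑ k ∈ JF, c i k ≤ ∑ i ∈ Finset.Ioc t i₁, ∑ k ∈ JF, c i k :=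
              Finset.sum_le_sum_of_subset_of_nonneg hsub
                (fun i _ _ => Finset.sum_nonneg fun k _ => hc i k)
          _ ≤ ∑ i ∈ Finset.Ioc t i₁, 1 := Finset.sum_le_sum fun i _ => hrowJ i
          _ = ((i₁.val - t.val : ℕ) : ℝ) := by
              rw [Finset.sum_const, Fin.card_Ioc]
              simp
      have hstep2 : ((i₁.val - t.val : ℕ) : ℝ) ≤ ∑ k ∈ Finset.Ioi t, ∑ i ∈ NearHi, c i k := by
        have hsplit : ∀ k, ∑ i ∈ NearHi, c i k
            = 1 - ∑ i ∈ Finset.filter (fun i => ¬(lam' i < lam t + d/2)) Finset.univ, c i k := by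
          intro k
          have := Finset.sum_filter_add_sum_filter_not Finset.univ
            (fun i : Fin n => lam' i < lam t + d/2) (fun i => c i k)
          rw [hcol k] at this
          rw [hNearHi]
          linarith
        have hcompsub : Finset.filter (fun i : Fin n => ¬(lam' i < lam t + d/2)) Finset.univ
            ⊆ Finset.Ioi i₁ := by
          intro i hi
          rw [Finset.mem_filter, not_lt] at hi
          rw [Finset.mem_Ioi]
          by_contra hcon
          rw [not_lt] at hcon
          have := hmono' hcon
          linarith [hi₁mem.2]
        have hbound2 : ∑ k ∈ Finset.Ioi t,
            ∑ i ∈ Finset.filter (fun i : Fin n => ¬(lam' i < lam t + d/2)) Finset.univ, c i k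
            ≤ ((n - 1 - i₁.val : ℕ) : ℝ) := by
          rw [Finset.sum_comm]
          calc ∑ i ∈ Finset.filter (fun i : Fin n => ¬(lam' i < lam t + d/2)) Finset.univ,
                ∑ k ∈ Finset.Ioi t, c i k
              ≤ ∑ i ∈ Finset.filter (fun i : Fin n => ¬(lam' i < lam t + d/2)) Finset.univ, 1 := by
                refine Finset.sum_le_sum fun i _ => ?_
                rw [← hrow i]
                exact Finset.sum_le_sum_of_subset_of_nonneg (Finset.subset_univ _)
                  (fun k _ _ => hc i k)
            _ ≤ ∑ i ∈ Finset.Ioi i₁, (1:ℝ) := by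
                apply Finset.sum_le_sum_of_subset_of_nonneg hcompsub
                intro i _ _; norm_num
            _ = ((n - 1 - i₁.val : ℕ) : ℝ) := by rw [Finset.sum_const, Fin.card_Ioi]; simp
        have hIoi : (Finset.Ioi t).card = n - 1 - t.val := Fin.card_Ioi t
        have hcast : ((i₁.val - t.val : ℕ) : ℝ)
            = ((n - 1 - t.val : ℕ) : ℝ) - ((n - 1 - i₁.val : ℕ) : ℝ) := by
          have h1 : t.val < i₁.val := hi₁mem.1
          have h2 : i₁.val < n := i₁.isLt
          rw [show (n - 1 - t.val) = (i₁.val - t.val) + (n - 1 - i₁.val) by omega]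
          push_cast
          ring
        rw [hcast]
        calc ((n - 1 - t.val : ℕ) : ℝ) - ((n - 1 - i₁.val : ℕ) : ℝ)
            ≤ ∑ k ∈ Finset.Ioi t, (1:ℝ) - ∑ k ∈ Finset.Ioi t,
              ∑ i ∈ Finset.filter (fun i : Fin n => ¬(lam' i < lam t + d/2)) Finset.univ, c i k := by
              rw [Finset.sum_const, hIoi]
              simp only [nsmul_eq_mul, mul_one]
              linarith [hbound2]
          _ = ∑ k ∈ Finset.Ioi t, (1 - ∑ i ∈ Finset.filter
              (fun i : Fin n => ¬(lam' i < lam t + d/2)) Finset.univ, c i k) := by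
              rw [Finset.sum_sub_distrib]
          _ = ∑ k ∈ Finset.Ioi t, ∑ i ∈ NearHi, c i k := by
              refine Finset.sum_congr rfl fun k _ => ?_
              rw [hsplit k]
      have hstep3 : ∑ k ∈ Finset.Ioi t, ∑ i ∈ NearHi, c i k
          ≤ (4/d^2) * ∑ k ∈ Finset.Ioi t, ∑ i ∈ NearHi, w i k * c i k := by
        rw [Finset.mul_sum]
        refine Finset.sum_le_sum fun k hk => ?_
        rw [Finset.mul_sum]
        refine Finset.sum_le_sum fun i hi => ?_
        rw [Finset.mem_Ioi] at hk
        have hi' := (Finset.mem_filter.mp hi).2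
        apply hentry
        have h1 : lam t + d ≤ lam k := hlamHi k hk
        rw [abs_of_nonneg (by linarith)]
        linarith
      calc ∑ i ∈ BadHi, ∑ k ∈ JF, c i k ≤ ((i₁.val - t.val : ℕ) : ℝ) := hstep1
        _ ≤ ∑ k ∈ Finset.Ioi t, ∑ i ∈ NearHi, c i k := hstep2
        _ ≤ (4/d^2) * ∑ k ∈ Finset.Ioi t, ∑ i ∈ NearHi, w i k * c i k := hstep3
    · rw [Finset.not_nonempty_iff_eq_empty] at hBH
      rw [hBH, Finset.sum_empty]
      exact mul_nonneg hdinv.le (Finset.sum_nonneg fun k _ =>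
        Finset.sum_nonneg fun i _ => hwcnn i k)
  -- decomposition of the LHS
  have hdisj1 : Disjoint BadLo GoodLo := by
    rw [Finset.disjoint_left]
    intro i h1 h2
    exact (Finset.mem_filter.mp h2).2.2 (Finset.mem_filter.mp h1).2.2
  have hdisj2 : Disjoint BadHi GoodHi := by
    rw [Finset.disjoint_left]
    intro i h1 h2
    exact (Finset.mem_filter.mp h2).2.2 (Finset.mem_filter.mp h1).2.2
  have hdisj3 : Disjoint (BadLo ∪ GoodLo) (BadHi ∪ GoodHi) := by
    rw [Finset.disjoint_left]
    intro i h1 h2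
    have hi1 : i < s := by
      rcases Finset.mem_union.mp h1 with h | h
      · exact (Finset.mem_filter.mp h).2.1
      · exact (Finset.mem_filter.mp h).2.1
    have hi2 : t < i := by
      rcases Finset.mem_union.mp h2 with h | h
      · exact (Finset.mem_filter.mp h).2.1
      · exact (Finset.mem_filter.mp h).2.1
    exact absurd (lt_trans (lt_of_lt_of_le hi1 hst) hi2) (lt_irrefl i)
  have hJC : Finset.filter (fun i : Fin n => ¬(s ≤ i ∧ i ≤ t)) Finset.univ
      = (BadLo ∪ GoodLo) ∪ (BadHi ∪ GoodHi) := by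
    ext i
    simp only [Finset.mem_filter, Finset.mem_union, Finset.mem_univ, true_and,
      hBadLo, hGoodLo, hBadHi, hGoodHi, not_and_or, not_le]
    constructor
    · intro h
      rcases h with h | h
      · by_cases hP : lam s - d/2 < lam' i
        · exact Or.inl (Or.inl ⟨h, hP⟩)
        · exact Or.inl (Or.inr ⟨h, hP⟩)
      · by_cases hQ : lam' i < lam t + d/2
        · exact Or.inr (Or.inl ⟨h, hQ⟩)
        · exact Or.inr (Or.inr ⟨h, hQ⟩)
    · intro h
      rcases h with (h | h) | (h | h)
      · exact Or.inl h.1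
      · exact Or.inl h.1
      · exact Or.inr h.1
      · exact Or.inr h.1
  rw [hJC, Finset.sum_union hdisj3, Finset.sum_union hdisj1, Finset.sum_union hdisj2]
  -- combine the four bounds
  have htotal : ∑ k ∈ Finset.Iio s, ∑ i ∈ NearLo, w i k * c i k
      + ∑ i ∈ GoodLo, ∑ k ∈ JF, w i k * c i k
      + ∑ k ∈ Finset.Ioi t, ∑ i ∈ NearHi, w i k * c i k
      + ∑ i ∈ GoodHi, ∑ k ∈ JF, w i k * c i k
      ≤ ∑ i, ∑ k, w i k * c i k := by
    have hcoldisj1 : Disjoint (Finset.Iio s) JF := by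
      rw [Finset.disjoint_left]
      intro k h1 h2
      exact absurd (Finset.mem_filter.mp h2).2.1 (not_le.mpr (Finset.mem_Iio.mp h1))
    have hcoldisj2 : Disjoint (Finset.Iio s ∪ JF) (Finset.Ioi t) := by
      rw [Finset.disjoint_left]
      intro k h1 h2
      have h2' := Finset.mem_Ioi.mp h2
      rcases Finset.mem_union.mp h1 with h | h
      · exact absurd (lt_trans (lt_of_le_of_lt hst h2') (Finset.mem_Iio.mp h)) (lt_irrefl s)
      · exact absurd (Finset.mem_filter.mp h).2.2 (not_le.mpr h2')
    have hcoluniv : (Finset.univ : Finset (Fin n)) = (Finset.Iio s ∪ JF) ∪ Finset.Ioi t := by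
      ext k
      simp only [Finset.mem_univ, Finset.mem_union, Finset.mem_Iio, Finset.mem_Ioi,
        hJF, Finset.mem_filter, true_and, true_iff]
      by_cases h1 : k < s
      · exact Or.inl (Or.inl h1)
      · by_cases h2 : t < k
        · exact Or.inr h2
        · exact Or.inl (Or.inr ⟨not_lt.mp h1, not_lt.mp h2⟩)
    have h0 : ∑ i, ∑ k, w i k * c i k = ∑ k, ∑ i, w i k * c i k := Finset.sum_comm
    have hsplit3 : ∑ k, ∑ i, w i k * c i k
        = ∑ k ∈ Finset.Iio s, ∑ i, w i k * c i k + ∑ k ∈ JF, ∑ i, w i k * c i k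
          + ∑ k ∈ Finset.Ioi t, ∑ i, w i k * c i k := by
      calc ∑ k, ∑ i, w i k * c i k
          = ∑ k ∈ (Finset.Iio s ∪ JF) ∪ Finset.Ioi t, ∑ i, w i k * c i k := by
            rw [← hcoluniv]
        _ = _ := by rw [Finset.sum_union hcoldisj2, Finset.sum_union hcoldisj1]
    rw [h0, hsplit3]
    have hb1 : ∑ k ∈ Finset.Iio s, ∑ i ∈ NearLo, w i k * c i k
        ≤ ∑ k ∈ Finset.Iio s, ∑ i, w i k * c i k :=
      Finset.sum_le_sum fun k _ => Finset.sum_le_sum_of_subset_of_nonneg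
        (Finset.subset_univ _) (fun i _ _ => hwcnn i k)
    have hb3 : ∑ k ∈ Finset.Ioi t, ∑ i ∈ NearHi, w i k * c i k
        ≤ ∑ k ∈ Finset.Ioi t, ∑ i, w i k * c i k :=
      Finset.sum_le_sum fun k _ => Finset.sum_le_sum_of_subset_of_nonneg
        (Finset.subset_univ _) (fun i _ _ => hwcnn i k)
    have hb24 : ∑ i ∈ GoodLo, ∑ k ∈ JF, w i k * c i k
        + ∑ i ∈ GoodHi, ∑ k ∈ JF, w i k * c i k
        ≤ ∑ k ∈ JF, ∑ i, w i k * c i k := by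
      rw [Finset.sum_comm (s := GoodLo), Finset.sum_comm (s := GoodHi),
        ← Finset.sum_add_distrib]
      refine Finset.sum_le_sum fun k _ => ?_
      have hdisjG : Disjoint GoodLo GoodHi := by
        rw [Finset.disjoint_left]
        intro i h1 h2
        have hi1 : i < s := (Finset.mem_filter.mp h1).2.1
        have hi2 : t < i := (Finset.mem_filter.mp h2).2.1
        exact absurd (lt_trans (lt_of_lt_of_le hi1 hst) hi2) (lt_irrefl i)
      rw [← Finset.sum_union hdisjG]
      exact Finset.sum_le_sum_of_subset_of_nonneg (Finset.subset_univ _)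
        (fun i _ _ => hwcnn i k)
    linarith
  calc ∑ i ∈ BadLo, ∑ k ∈ JF, c i k + ∑ i ∈ GoodLo, ∑ k ∈ JF, c i k
      + (∑ i ∈ BadHi, ∑ k ∈ JF, c i k + ∑ i ∈ GoodHi, ∑ k ∈ JF, c i k)
      ≤ (4/d^2) * (∑ k ∈ Finset.Iio s, ∑ i ∈ NearLo, w i k * c i k
        + ∑ i ∈ GoodLo, ∑ k ∈ JF, w i k * c i k
        + ∑ k ∈ Finset.Ioi t, ∑ i ∈ NearHi, w i k * c i k
        + ∑ i ∈ GoodHi, ∑ k ∈ JF, w i k * c i k) := by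
        rw [mul_add, mul_add, mul_add]
        linarith [hBadLoBound, hGoodLoBound, hBadHiBound, hGoodHiBound]
    _ ≤ (4/d^2) * ∑ i, ∑ k, w i k * c i k :=
        mul_le_mul_of_nonneg_left htotal hdinv.le

end DKAux

set_option maxHeartbeats 2000000 in
/-- Davis–Kahan: for real symmetric `A, A'` with sorted orthonormal
eigensystems `(lam, V)` and `(lam', V')`, a contiguous index interval `{s,…,t}`, and
`d > 0` a lower bound on the spectral gaps at the boundary of the interval
(with the convention that gaps at positions `0` and `n` are `+∞`),
`min_{Q ∈ O(|J|)} ‖[V]_J − [V']_J Q‖_F ≤ √8 min{√|J| ‖A−A'‖₂, ‖A−A'‖_F}/d`. -/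
theorem stmt_8 {n : ℕ} (A A' : Matrix (Fin n) (Fin n) ℝ)
    (hA : A.IsSymm) (hA' : A'.IsSymm)
    (lam lam' : Fin n → ℝ) (V V' : Fin n → Fin n → ℝ)
    (hsys : IsSortedEigenSystem A lam V) (hsys' : IsSortedEigenSystem A' lam' V')
    (s t : Fin n) (hst : s ≤ t) (d : ℝ) (hd : 0 < d)
    (hgap1 : ∀ _ : 0 < s.val,
      d ≤ lam s - lam ⟨s.val - 1, by have := s.isLt; omega⟩)
    (hgap2 : ∀ ht : t.val + 1 < n, d ≤ lam ⟨t.val + 1, ht⟩ - lam t) :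
    orthMinDist
        (Matrix.of fun (r : Fin n) (j : Fin (t.val - s.val + 1)) =>
          V ⟨s.val + j.val, by
            have h1 := j.isLt; have h2 := t.isLt
            have h3 := Fin.le_def.mp hst; omega⟩ r)
        (Matrix.of fun (r : Fin n) (j : Fin (t.val - s.val + 1)) =>
          V' ⟨s.val + j.val, by
            have h1 := j.isLt; have h2 := t.isLt
            have h3 := Fin.le_def.mp hst; omega⟩ r) ≤
      Real.sqrt 8 *
        min (Real.sqrt ((t.val - s.val + 1 : ℕ) : ℝ) * specNorm (A - A'))
          (frobNorm (A - A')) / d := by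
  classical
  obtain ⟨hmono, heig, hortho⟩ := hsys
  obtain ⟨hmono', heig', hortho'⟩ := hsys'
  have hgap1n : ∀ _ : 0 < s.val,
      d ≤ lam s - lam ⟨s.val - 1, lt_of_le_of_lt (Nat.sub_le _ _) s.isLt⟩ :=
    fun h => hgap1 h

  set G : Matrix (Fin n) (Fin n) ℝ := Matrix.of (fun i j => V i j) with hG
  set G' : Matrix (Fin n) (Fin n) ℝ := Matrix.of (fun i j => V' i j) with hG'
  have hGGt : G * Gᵀ = 1 := by
    ext i j
    rw [Matrix.mul_apply, Matrix.one_apply]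
    have := hortho i j
    rw [dotProduct] at this
    simpa [hG] using this
  have hG'G't : G' * G'ᵀ = 1 := by
    ext i j
    rw [Matrix.mul_apply, Matrix.one_apply]
    have := hortho' i j
    rw [dotProduct] at this
    simpa [hG'] using this
  have hGtG : Gᵀ * G = 1 := mul_eq_one_comm.mp hGGt
  have hG'tG' : G'ᵀ * G' = 1 := mul_eq_one_comm.mp hG'G't
  have hGA : G * A = Matrix.diagonal lam * G := by
    ext i j
    have h1 := congrFun (heig i) j
    rw [Matrix.mulVec, dotProduct] at h1
    rw [Matrix.mul_apply, Matrix.diagonal_mul]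
    calc ∑ k, G i k * A k j = ∑ k, A j k * V i k := by
          refine Finset.sum_congr rfl fun k _ => ?_
          rw [hG]
          simp only [Matrix.of_apply]
          rw [← hA.apply k j]
          ring
      _ = lam i * V i j := by rw [h1]; simp
      _ = lam i * G i j := rfl
  have hG'A' : G' * A' = Matrix.diagonal lam' * G' := by
    ext i j
    have h1 := congrFun (heig' i) j
    rw [Matrix.mulVec, dotProduct] at h1
    rw [Matrix.mul_apply, Matrix.diagonal_mul]
    calc ∑ k, G' i k * A' k j = ∑ k, A' j k * V' i k := by
          refine Finset.sum_congr rfl fun k _ => ?_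
          rw [hG']
          simp only [Matrix.of_apply]
          rw [← hA'.apply k j]
          ring
      _ = lam' i * V' i j := by rw [h1]; simp
      _ = lam' i * G' i j := rfl
  set X : Matrix (Fin n) (Fin n) ℝ := G' * Gᵀ with hX
  have hXXt : X * Xᵀ = 1 := by
    rw [hX, Matrix.transpose_mul, Matrix.transpose_transpose]
    calc G' * Gᵀ * (G * G'ᵀ) = G' * (Gᵀ * G) * G'ᵀ := by
          rw [Matrix.mul_assoc, Matrix.mul_assoc, Matrix.mul_assoc]
      _ = 1 := by rw [hGtG, Matrix.mul_one, hG'G't]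
  have hXtX : Xᵀ * X = 1 := mul_eq_one_comm.mp hXXt
  have hrowsum : ∀ i, ∑ k, (X i k)^2 = 1 := by
    intro i
    have h1 : (X * Xᵀ) i i = (1 : Matrix (Fin n) (Fin n) ℝ) i i := by rw [hXXt]
    rw [Matrix.mul_apply, Matrix.one_apply_eq] at h1
    rw [← h1]
    refine Finset.sum_congr rfl fun k _ => ?_
    rw [Matrix.transpose_apply, sq]
  have hcolsum : ∀ k, ∑ i, (X i k)^2 = 1 := by
    intro k
    have h1 : (Xᵀ * X) k k = (1 : Matrix (Fin n) (Fin n) ℝ) k k := by rw [hXtX]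
    rw [Matrix.mul_apply, Matrix.one_apply_eq] at h1
    rw [← h1]
    refine Finset.sum_congr rfl fun i _ => ?_
    rw [Matrix.transpose_apply, sq]
  set E : Matrix (Fin n) (Fin n) ℝ := A - A' with hE
  set Y : Matrix (Fin n) (Fin n) ℝ := G' * E * Gᵀ with hY
  have hAGt : A * Gᵀ = Gᵀ * Matrix.diagonal lam := by
    have h1 := congrArg Matrix.transpose hGA
    rw [Matrix.transpose_mul, Matrix.transpose_mul, Matrix.diagonal_transpose, hA.eq] at h1
    exact h1
  have hYentry : ∀ i k, Y i k = (lam k - lam' i) * X i k := by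
    intro i k
    have e1 : G' * A * Gᵀ = X * Matrix.diagonal lam := by
      rw [Matrix.mul_assoc, hAGt, hX, ← Matrix.mul_assoc]
    have e2 : G' * A' * Gᵀ = Matrix.diagonal lam' * X := by
      rw [hG'A', hX, Matrix.mul_assoc]
    have h1 : Y = X * Matrix.diagonal lam - Matrix.diagonal lam' * X := by
      rw [hY, hE, Matrix.mul_sub, Matrix.sub_mul, e1, e2]
    rw [h1]
    simp only [Matrix.sub_apply, Matrix.mul_diagonal, Matrix.diagonal_mul]
    ring
  have hYtY : Yᵀ * Y = G * (Eᵀ * (E * Gᵀ)) := by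
    rw [hY]
    simp only [Matrix.transpose_mul, Matrix.transpose_transpose]
    simp only [Matrix.mul_assoc]
    rw [← Matrix.mul_assoc G'ᵀ G', hG'tG', Matrix.one_mul]
  have hYfrob : ∑ i, ∑ k, (Y i k)^2 = ∑ i, ∑ j, (E i j)^2 := by
    rw [sum_sq_eq_trace Y, sum_sq_eq_trace E, hYtY]
    rw [Matrix.trace_mul_comm]
    have : Eᵀ * (E * Gᵀ) * G = Eᵀ * E := by
      simp only [Matrix.mul_assoc]
      rw [hGtG, Matrix.mul_one]
    rw [this]
  -- column bound
  have hdotmul : ∀ (B : Matrix (Fin n) (Fin n) ℝ) (hB : Bᵀ * B = 1) (z : Fin n → ℝ),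
      dotProduct (B.mulVec z) (B.mulVec z) = dotProduct z z := by
    intro B hB z
    rw [Matrix.dotProduct_mulVec]
    have h1 : (B.mulVec z) ᵥ* B = (Bᵀ * B).mulVec z := by
      rw [← Matrix.mulVec_transpose, Matrix.mulVec_mulVec]
    rw [h1, hB, Matrix.one_mulVec]
  have hcolY : ∀ k, ∑ i, (Y i k)^2 ≤ specNorm E ^ 2 := by
    intro k
    have hz : ∀ i, Y i k = (G'.mulVec (E.mulVec (V k))) i := by
      intro i
      rw [hY, Matrix.mul_assoc, Matrix.mul_apply, Matrix.mulVec, dotProduct]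
      refine Finset.sum_congr rfl fun a _ => ?_
      congr 1
    have h1 : ∑ i, (Y i k)^2 = dotProduct (E.mulVec (V k)) (E.mulVec (V k)) := by
      rw [← hdotmul G' hG'tG' (E.mulVec (V k))]
      rw [dotProduct]
      refine Finset.sum_congr rfl fun i _ => ?_
      rw [hz i, sq]
    rw [h1]
    have h2 := spec_bound E (V k)
    have h3 : ∑ i, (V k i)^2 = 1 := by
      have := hortho k k
      rw [if_pos rfl, dotProduct] at this
      rw [← this]
      exact Finset.sum_congr rfl fun i _ => sq (V k i)
    rw [h3, mul_one] at h2
    calc dotProduct (E.mulVec (V k)) (E.mulVec (V k)) = ∑ i, (E.mulVec (V k) i)^2 := by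
          rw [dotProduct]; exact Finset.sum_congr rfl fun i _ => (sq _).symm
      _ ≤ specNorm E ^2 := h2
  -- index plumbing
  set p : ℕ := t.val - s.val + 1 with hp
  have hembp : ∀ j : Fin p, s.val + j.val < n := by
    intro j
    have h1 := j.isLt
    have h2 := t.isLt
    have h3 : s.val ≤ t.val := hst
    omega
  set embp : Fin p → Fin n := fun j => ⟨s.val + j.val, hembp j⟩ with hembp'
  have hembinj : Function.Injective embp := by
    intro a b hab
    have := congrArg Fin.val hab
    simp only [hembp'] at this
    exact Fin.ext (by omega)
  set JF := Finset.filter (fun k : Fin n => s ≤ k ∧ k ≤ t) Finset.univ with hJF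
  have hJFim : JF = Finset.image embp Finset.univ := by
    ext i
    simp only [hJF, Finset.mem_filter, Finset.mem_univ, true_and, Finset.mem_image]
    constructor
    · rintro ⟨h1, h2⟩
      have h1' : s.val ≤ i.val := h1
      have h2' : i.val ≤ t.val := h2
      refine ⟨⟨i.val - s.val, by omega⟩, ?_⟩
      rw [hembp']
      exact Fin.ext (by simp; omega)
    · rintro ⟨j, rfl⟩
      have h1 := j.isLt
      rw [hembp']
      constructor
      · show s.val ≤ s.val + j.val
        omega
      · show s.val + j.val ≤ t.val
        omega
  have hsumJ : ∀ f : Fin n → ℝ, ∑ i ∈ JF, f i = ∑ j : Fin p, f (embp j) := by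
    intro f
    rw [hJFim, Finset.sum_image (fun a _ b _ h => hembinj h)]
  have hJFcard : (JF.card : ℝ) = (p : ℝ) := by
    rw [hJFim, Finset.card_image_of_injective _ hembinj, Finset.card_univ, Fintype.card_fin]
  set Umat : Matrix (Fin n) (Fin p) ℝ := Matrix.of (fun r j => V (embp j) r) with hUmat
  set Wmat : Matrix (Fin n) (Fin p) ℝ := Matrix.of (fun r j => V' (embp j) r) with hWmat
  have hUtU : Umatᵀ * Umat = 1 := by
    ext j k
    rw [Matrix.mul_apply, Matrix.one_apply]
    have := hortho (embp j) (embp k)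
    rw [dotProduct] at this
    simp only [Matrix.transpose_apply, hUmat, Matrix.of_apply]
    rw [this]
    by_cases hjk : j = k
    · subst hjk; simp
    · rw [if_neg (fun hc => hjk (hembinj hc)), if_neg hjk]
  have hWtW : Wmatᵀ * Wmat = 1 := by
    ext j k
    rw [Matrix.mul_apply, Matrix.one_apply]
    have := hortho' (embp j) (embp k)
    rw [dotProduct] at this
    simp only [Matrix.transpose_apply, hWmat, Matrix.of_apply]
    rw [this]
    by_cases hjk : j = k
    · subst hjk; simp
    · rw [if_neg (fun hc => hjk (hembinj hc)), if_neg hjk]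
  set Mmat : Matrix (Fin p) (Fin p) ℝ := Wmatᵀ * Umat with hMmat
  have hMX : ∀ j k, Mmat j k = X (embp j) (embp k) := by
    intro j k
    rw [hMmat, Matrix.mul_apply, hX, Matrix.mul_apply]
    refine Finset.sum_congr rfl fun r _ => ?_
    simp only [Matrix.transpose_apply, hWmat, hUmat, hG, hG', Matrix.of_apply]
  have hMcontr : ∀ x : Fin p → ℝ,
      dotProduct (Mmat.mulVec x) (Mmat.mulVec x) ≤ dotProduct x x := by
    intro x
    have hsplit : Mmat.mulVec x = Wmatᵀ.mulVec (Umat.mulVec x) := by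
      rw [hMmat, Matrix.mulVec_mulVec]
    have hU : dotProduct (Umat.mulVec x) (Umat.mulVec x) = dotProduct x x := by
      rw [Matrix.dotProduct_mulVec]
      have h1 : (Umat.mulVec x) ᵥ* Umat = (Umatᵀ * Umat).mulVec x := by
        rw [← Matrix.mulVec_transpose, Matrix.mulVec_mulVec]
      rw [h1, hUtU, Matrix.one_mulVec]
    set y := Umat.mulVec x with hy
    have hW : dotProduct (Wmatᵀ.mulVec y) (Wmatᵀ.mulVec y) ≤ dotProduct y y := by
      set Z : Matrix (Fin n) (Fin n) ℝ := 1 - Wmat * Wmatᵀ with hZ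
      have hZt : Zᵀ = Z := by
        rw [hZ, Matrix.transpose_sub, Matrix.transpose_one, Matrix.transpose_mul,
          Matrix.transpose_transpose]
      have hZZ : Z * Z = Z := by
        rw [hZ, Matrix.mul_sub, Matrix.sub_mul, Matrix.sub_mul]
        simp only [one_mul, mul_one, Matrix.one_mul, Matrix.mul_one]
        have : Wmat * Wmatᵀ * (Wmat * Wmatᵀ) = Wmat * Wmatᵀ := by
          rw [Matrix.mul_assoc, ← Matrix.mul_assoc Wmatᵀ Wmat Wmatᵀ, hWtW,
            Matrix.one_mul]
        rw [this]
        abel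
      have h2 : dotProduct (Wmatᵀ.mulVec y) (Wmatᵀ.mulVec y)
          = dotProduct ((Wmat * Wmatᵀ).mulVec y) y := by
        rw [Matrix.dotProduct_mulVec]
        have h1 : (Wmatᵀ.mulVec y) ᵥ* Wmatᵀ = (Wmatᵀᵀ * Wmatᵀ).mulVec y := by
          rw [← Matrix.mulVec_transpose, Matrix.mulVec_mulVec]
        rw [h1, Matrix.transpose_transpose]
      have h3 : 0 ≤ dotProduct (Z.mulVec y) y := by
        have h4 : Z.mulVec y = (Z * Z).mulVec y := by rw [hZZ]
        rw [h4, ← Matrix.mulVec_mulVec, dotProduct_comm, Matrix.dotProduct_mulVec]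
        have h5 : y ᵥ* Z = Z.mulVec y := by
          rw [← hZt, Matrix.vecMul_transpose, hZt]
        rw [h5, dotProduct]
        exact Finset.sum_nonneg fun i _ => mul_self_nonneg _
      have h6 : dotProduct (Z.mulVec y) y
          = dotProduct y y - dotProduct ((Wmat * Wmatᵀ).mulVec y) y := by
        rw [hZ, Matrix.sub_mulVec, sub_dotProduct, Matrix.one_mulVec]
      rw [h2]
      linarith [h3, h6.symm.trans_le (le_of_eq rfl)]
    calc dotProduct (Mmat.mulVec x) (Mmat.mulVec x)
        = dotProduct (Wmatᵀ.mulVec y) (Wmatᵀ.mulVec y) := by rw [hsplit]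
      _ ≤ dotProduct y y := hW
      _ = dotProduct x x := hU
  -- polar decomposition step
  obtain ⟨Q, hQorth, hQtr⟩ := polar_lemma Mmat hMcontr
  have hfrobid : frobNorm (Umat - Wmat * Q)^2
      = 2*(p:ℝ) - 2 * Matrix.trace (Qᵀ * Mmat) := by
    rw [frobNorm_sq, sum_sq_eq_trace]
    have hexp : (Umat - Wmat * Q)ᵀ * (Umat - Wmat * Q)
        = Umatᵀ * Umat - Umatᵀ * (Wmat * Q)
          - ((Wmat * Q)ᵀ * Umat - (Wmat * Q)ᵀ * (Wmat * Q)) := by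
      rw [Matrix.transpose_sub, Matrix.sub_mul, Matrix.mul_sub, Matrix.mul_sub]
    rw [hexp]
    rw [Matrix.trace_sub, Matrix.trace_sub, Matrix.trace_sub]
    have hT1 : Matrix.trace (Umatᵀ * Umat) = (p:ℝ) := by
      rw [hUtU, Matrix.trace_one]
      simp
    have hT2 : Matrix.trace (Umatᵀ * (Wmat * Q)) = Matrix.trace (Qᵀ * Mmat) := by
      rw [← Matrix.trace_transpose (Umatᵀ * (Wmat * Q))]
      congr 1
      rw [Matrix.transpose_mul, Matrix.transpose_mul, Matrix.transpose_transpose,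
        Matrix.mul_assoc, hMmat]
    have hT3 : Matrix.trace ((Wmat * Q)ᵀ * Umat) = Matrix.trace (Qᵀ * Mmat) := by
      congr 1
      rw [Matrix.transpose_mul, Matrix.mul_assoc, hMmat]
    have hT4 : Matrix.trace ((Wmat * Q)ᵀ * (Wmat * Q)) = (p:ℝ) := by
      have h1 : (Wmat * Q)ᵀ * (Wmat * Q) = Qᵀ * Q := by
        rw [Matrix.transpose_mul, Matrix.mul_assoc, ← Matrix.mul_assoc Wmatᵀ Wmat Q,
          hWtW, Matrix.one_mul]
      rw [h1, hQorth.2, Matrix.trace_one]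
      simp
    rw [hT1, hT2, hT3, hT4]
    ring
  have hMtM : Matrix.trace (Mmatᵀ * Mmat) = ∑ i ∈ JF, ∑ k ∈ JF, (X i k)^2 := by
    rw [← sum_sq_eq_trace]
    rw [hsumJ (fun i => ∑ k ∈ JF, (X i k)^2)]
    refine Finset.sum_congr rfl fun j _ => ?_
    rw [hsumJ (fun k => (X (embp j) k)^2)]
    refine Finset.sum_congr rfl fun k _ => ?_
    rw [hMX]
  have hPsum : ∑ i, ∑ k ∈ JF, (X i k)^2 = (p:ℝ) := by
    rw [Finset.sum_comm]
    calc ∑ k ∈ JF, ∑ i, (X i k)^2 = ∑ k ∈ JF, 1 := by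
          exact Finset.sum_congr rfl fun k _ => hcolsum k
      _ = (p:ℝ) := by rw [Finset.sum_const, nsmul_eq_mul, mul_one, hJFcard]
  set JC := Finset.filter (fun i : Fin n => ¬(s ≤ i ∧ i ≤ t)) Finset.univ with hJC
  have hSB : (p:ℝ) - Matrix.trace (Mmatᵀ * Mmat) = ∑ i ∈ JC, ∑ k ∈ JF, (X i k)^2 := by
    have hsp := Finset.sum_filter_add_sum_filter_not Finset.univ
      (fun i : Fin n => s ≤ i ∧ i ≤ t) (fun i => ∑ k ∈ JF, (X i k)^2)
    rw [hPsum] at hsp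
    rw [hMtM, hJC]
    have : ∑ i ∈ Finset.filter (fun i : Fin n => s ≤ i ∧ i ≤ t) Finset.univ,
        ∑ k ∈ JF, (X i k)^2 = ∑ i ∈ JF, ∑ k ∈ JF, (X i k)^2 := by rw [hJF]
    linarith [hsp, this]
  have htrMnn : 0 ≤ Matrix.trace (Mmatᵀ * Mmat) := by
    rw [← sum_sq_eq_trace]
    exact Finset.sum_nonneg fun i _ => Finset.sum_nonneg fun j _ => sq_nonneg _
  -- frobenius-type bound
  have hwc : ∑ i, ∑ k, (lam k - lam' i)^2 * (X i k)^2 = frobNorm E ^2 := by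
    rw [frobNorm_sq, ← hYfrob]
    refine Finset.sum_congr rfl fun i _ => Finset.sum_congr rfl fun k _ => ?_
    rw [hYentry]
    ring
  have hbF : ∑ i ∈ JC, ∑ k ∈ JF, (X i k)^2 ≤ (4/d^2) * frobNorm E ^2 := by
    rw [← hwc]
    exact comb_bound lam lam' (fun i k => (X i k)^2) (fun i k => (lam k - lam' i)^2)
      (fun _ _ => rfl) (fun i k => sq_nonneg _) hrowsum hcolsum hmono hmono'
      s t hst d hd hgap1n hgap2
  -- spectral-type bound
  have hbS : ∑ i ∈ JC, ∑ k ∈ JF, (X i k)^2 ≤ (4/d^2) * ((p:ℝ) * specNorm E ^2) := by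
    by_cases hcase : d ≤ 2 * specNorm E
    · have h1 : ∑ i ∈ JC, ∑ k ∈ JF, (X i k)^2 ≤ (p:ℝ) := by
        rw [← hPsum]
        exact Finset.sum_le_sum_of_subset_of_nonneg (Finset.subset_univ _)
          (fun i _ _ => Finset.sum_nonneg fun k _ => sq_nonneg _)
      have hd2 : d^2 ≤ 4 * specNorm E ^2 := by nlinarith [hd.le]
      have h2 : (p:ℝ) ≤ (4/d^2) * ((p:ℝ) * specNorm E ^2) := by
        rw [div_mul_eq_mul_div, le_div_iff₀ (by positivity)]
        nlinarith [Nat.cast_nonneg (α := ℝ) p]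
      linarith
    · push_neg at hcase
      have hweylgap : ∀ i ∈ JC, ∀ k ∈ JF, d/2 ≤ |lam k - lam' i| := by
        intro i hi k hk
        have hik := (Finset.mem_filter.mp hi).2
        have hkk := (Finset.mem_filter.mp hk).2
        rw [not_and_or, not_le, not_le] at hik
        have hlamk1 : lam s ≤ lam k := hmono hkk.1
        have hlamk2 : lam k ≤ lam t := hmono hkk.2
        rcases hik with hlo | hhi
        · have hs0 : 0 < s.val := lt_of_le_of_lt (Nat.zero_le _) hlo
          have hwey := weyl_le A A' lam lam' V V' hmono heig hortho hmono' heig' hortho' i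
          have hlami : lam i ≤ lam ⟨s.val - 1, lt_of_le_of_lt (Nat.sub_le _ _) s.isLt⟩ := by
            apply hmono
            rw [Fin.le_def]
            have : i.val < s.val := hlo
            simp only
            omega
          have hgap := hgap1n hs0
          have : d/2 ≤ lam k - lam' i := by
            rw [hE] at *
            linarith [hcase]
          calc d/2 ≤ lam k - lam' i := this
            _ ≤ |lam k - lam' i| := le_abs_self _
        · have ht1 : t.val + 1 < n := by
            have h1 := i.isLt
            have h2 : t.val < i.val := hhi
            omega
          have hwey := weyl_le A' A lam' lam V' V hmono' heig' hortho' hmono heig hortho i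
          rw [specNorm_sub_symm A' A] at hwey
          have hlami : lam ⟨t.val + 1, ht1⟩ ≤ lam i := by
            apply hmono
            rw [Fin.le_def]
            have : t.val < i.val := hhi
            simp only
            omega
          have hgap := hgap2 ht1
          have : d/2 ≤ -(lam k - lam' i) := by
            rw [hE] at *
            linarith [hcase]
          calc d/2 ≤ -(lam k - lam' i) := this
            _ ≤ |lam k - lam' i| := neg_le_abs _
      have hstep : ∑ i ∈ JC, ∑ k ∈ JF, (X i k)^2
          ≤ (4/d^2) * ∑ i, ∑ k ∈ JF, (lam k - lam' i)^2 * (X i k)^2 := by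
        have h1 : ∑ i ∈ JC, ∑ k ∈ JF, (X i k)^2
            ≤ ∑ i ∈ JC, ∑ k ∈ JF, (4/d^2) * ((lam k - lam' i)^2 * (X i k)^2) := by
          refine Finset.sum_le_sum fun i hi => Finset.sum_le_sum fun k hk => ?_
          have habs := hweylgap i hi k hk
          have hwge : d^2/4 ≤ (lam k - lam' i)^2 := by
            calc d^2/4 = (d/2)^2 := by ring
              _ ≤ |lam k - lam' i|^2 := pow_le_pow_left₀ (by linarith) habs 2
              _ = (lam k - lam' i)^2 := sq_abs _
          have heq1 : ((4:ℝ)/d^2) * (d^2/4) = 1 := by field_simp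
          calc (X i k)^2 = ((4/d^2) * (d^2/4)) * (X i k)^2 := by rw [heq1, one_mul]
            _ = (4/d^2) * (d^2/4 * (X i k)^2) := by ring
            _ ≤ (4/d^2) * ((lam k - lam' i)^2 * (X i k)^2) := by
                apply mul_le_mul_of_nonneg_left _ (by positivity)
                exact mul_le_mul_of_nonneg_right hwge (sq_nonneg _)
        calc ∑ i ∈ JC, ∑ k ∈ JF, (X i k)^2
            ≤ ∑ i ∈ JC, ∑ k ∈ JF, (4/d^2) * ((lam k - lam' i)^2 * (X i k)^2) := h1
          _ = (4/d^2) * ∑ i ∈ JC, ∑ k ∈ JF, (lam k - lam' i)^2 * (X i k)^2 := by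
              rw [Finset.mul_sum]
              exact Finset.sum_congr rfl fun i _ => by rw [Finset.mul_sum]
          _ ≤ (4/d^2) * ∑ i, ∑ k ∈ JF, (lam k - lam' i)^2 * (X i k)^2 := by
              apply mul_le_mul_of_nonneg_left _ (by positivity)
              exact Finset.sum_le_sum_of_subset_of_nonneg (Finset.subset_univ _)
                (fun i _ _ => Finset.sum_nonneg fun k _ =>
                  mul_nonneg (sq_nonneg _) (sq_nonneg _))
      have hcolbound : ∑ i, ∑ k ∈ JF, (lam k - lam' i)^2 * (X i k)^2
          ≤ (p:ℝ) * specNorm E ^2 := by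
        rw [Finset.sum_comm]
        calc ∑ k ∈ JF, ∑ i, (lam k - lam' i)^2 * (X i k)^2
            = ∑ k ∈ JF, ∑ i, (Y i k)^2 := by
              refine Finset.sum_congr rfl fun k _ => Finset.sum_congr rfl fun i _ => ?_
              rw [hYentry]
              ring
          _ ≤ ∑ k ∈ JF, specNorm E ^2 := Finset.sum_le_sum fun k _ => hcolY k
          _ = (p:ℝ) * specNorm E ^2 := by
              rw [Finset.sum_const, nsmul_eq_mul, hJFcard]
      calc ∑ i ∈ JC, ∑ k ∈ JF, (X i k)^2
          ≤ (4/d^2) * ∑ i, ∑ k ∈ JF, (lam k - lam' i)^2 * (X i k)^2 := hstep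
        _ ≤ (4/d^2) * ((p:ℝ) * specNorm E ^2) :=
            mul_le_mul_of_nonneg_left hcolbound (by positivity)
  -- final combination
  set mn := min (Real.sqrt (p:ℝ) * specNorm E) (frobNorm E) with hmn
  have hmn0 : 0 ≤ mn :=
    le_min (mul_nonneg (Real.sqrt_nonneg _) (specNorm_nonneg E)) (frobNorm_nonneg E)
  have hSBm : ∑ i ∈ JC, ∑ k ∈ JF, (X i k)^2 ≤ (4/d^2) * mn^2 := by
    rcases min_cases (Real.sqrt (p:ℝ) * specNorm E) (frobNorm E) with ⟨heq, _⟩ | ⟨heq, _⟩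
    · rw [hmn, heq, mul_pow, Real.sq_sqrt (Nat.cast_nonneg p)]
      exact hbS
    · rw [hmn, heq]
      exact hbF
  have hfq : frobNorm (Umat - Wmat * Q)^2 ≤ 8 * mn^2 / d^2 := by
    rw [hfrobid]
    have h1 : 2*(p:ℝ) - 2 * Matrix.trace (Qᵀ * Mmat)
        ≤ 2 * ((p:ℝ) - Matrix.trace (Mmatᵀ * Mmat)) := by linarith [hQtr]
    rw [hSB] at h1
    calc 2*(p:ℝ) - 2 * Matrix.trace (Qᵀ * Mmat)
        ≤ 2 * ∑ i ∈ JC, ∑ k ∈ JF, (X i k)^2 := h1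
      _ ≤ 2 * ((4/d^2) * mn^2) := by linarith [hSBm]
      _ = 8 * mn^2 / d^2 := by ring
  have hfin : frobNorm (Umat - Wmat * Q) ≤ Real.sqrt 8 * mn / d := by
    have h1 : frobNorm (Umat - Wmat * Q) = Real.sqrt (frobNorm (Umat - Wmat * Q)^2) :=
      (Real.sqrt_sq (frobNorm_nonneg _)).symm
    rw [h1]
    calc Real.sqrt (frobNorm (Umat - Wmat * Q)^2) ≤ Real.sqrt (8 * mn^2 / d^2) :=
          Real.sqrt_le_sqrt hfq
      _ = Real.sqrt 8 * mn / d := by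
          rw [show 8 * mn^2/d^2 = 8 * (mn/d)^2 by ring]
          rw [Real.sqrt_mul (by norm_num) ((mn/d)^2), Real.sqrt_sq (by positivity)]
          ring
  -- conclude via sInf
  unfold orthMinDist
  refine le_trans (csInf_le ⟨0, ?_⟩ ⟨Q, hQorth, rfl⟩) ?_
  · rintro r ⟨Q', hQ', rfl⟩
    exact frobNorm_nonneg _
  · exact hfin
end

section
/- Let L and L' be real symmetric n×n matrices, P ∈ S_n a permutation matrix, and let λ_1 ≤ … ≤ λ_n and λ'_1 ≤ … ≤ λ'_n be the eigenvalues of L and L' sorted increasingly (with repeats). Let ρ: [0,∞) → ℝ be J_ρ-Lipschitz. Then for every index i ∈ {1,…,n}: Σ_{j=1}^n | ρ(|λ_j − λ_i|) − ρ(|λ'_j − λ'_i|) | ≤ 2n J_ρ ‖L − P L' P^T‖₂. -/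
open Matrix

/- ### Auxiliary lemmas -/

lemma dot_sum_left {n : ℕ} {ι : Type*} (s : Finset ι) (f : ι → Fin n → ℝ) (u : Fin n → ℝ) :
    (∑ i ∈ s, f i) ⬝ᵥ u = ∑ i ∈ s, f i ⬝ᵥ u := by
  simp [dotProduct, Finset.sum_apply, Finset.sum_mul]
  exact Finset.sum_comm

lemma mulVec_sum' {n : ℕ} {ι : Type*} (A : Matrix (Fin n) (Fin n) ℝ) (s : Finset ι)
    (f : ι → Fin n → ℝ) : A *ᵥ (∑ i ∈ s, f i) = ∑ i ∈ s, A *ᵥ (f i) := by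
  exact map_sum (Matrix.mulVecLin A) f s

lemma orth_dot_sum {n : ℕ} {v : Fin n → Fin n → ℝ}
    (horth : ∀ i j, v i ⬝ᵥ v j = if i = j then (1 : ℝ) else 0)
    {ι : Type*} [Fintype ι] {g : ι → Fin n} (hg : Function.Injective g)
    (c d : ι → ℝ) :
    (∑ i, c i • v (g i)) ⬝ᵥ (∑ j, d j • v (g j)) = ∑ i, c i * d i := by
  classical
  have h : ∀ i j : ι, v (g i) ⬝ᵥ v (g j) = if i = j then (1 : ℝ) else 0 := by
    intro i j; rw [horth]; simp [hg.eq_iff]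
  rw [dot_sum_left]
  have : ∀ i : ι, (c i • v (g i)) ⬝ᵥ (∑ j, d j • v (g j)) = c i * d i := by
    intro i
    rw [smul_dotProduct]
    have : v (g i) ⬝ᵥ (∑ j, d j • v (g j)) = d i := by
      have e1 : ∀ j : ι, v (g i) ⬝ᵥ (d j • v (g j)) = if i = j then d j else 0 := by
        intro j
        rw [dotProduct_smul, h i j]
        by_cases hij : i = j <;> simp [hij]
      calc v (g i) ⬝ᵥ (∑ j, d j • v (g j)) = ∑ j, v (g i) ⬝ᵥ (d j • v (g j)) := by
            simp only [dotProduct, Finset.sum_apply, Finset.mul_sum]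
            exact Finset.sum_comm
        _ = ∑ j, if i = j then d j else 0 := by simp [e1]
        _ = d i := by simp
    rw [this, smul_eq_mul]
  simp [this]

lemma orth_li {n : ℕ} {v : Fin n → Fin n → ℝ}
    (horth : ∀ i j, v i ⬝ᵥ v j = if i = j then (1 : ℝ) else 0)
    {ι : Type*} [Fintype ι] {g : ι → Fin n} (hg : Function.Injective g) :
    LinearIndependent ℝ (fun i => v (g i)) := by
  rw [Fintype.linearIndependent_iff]
  intro c hc i
  have h0 : ∑ j, c j * c j = 0 := by
    rw [← orth_dot_sum horth hg c c, hc]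
    simp
  have := (Finset.sum_eq_zero_iff_of_nonneg
    (fun j _ => mul_self_nonneg (c j))).mp h0 i (Finset.mem_univ i)
  exact mul_self_eq_zero.mp this

lemma dot_spec_bound {n : ℕ} (M : Matrix (Fin n) (Fin n) ℝ) (x : Fin n → ℝ) :
    |x ⬝ᵥ M *ᵥ x| ≤ specNorm M * (x ⬝ᵥ x) := by
  set x' : EuclideanSpace ℝ (Fin n) := WithLp.toLp 2 x with hx'
  have h1 : x ⬝ᵥ M *ᵥ x = inner ℝ x' (Matrix.toEuclideanLin M x') := by
    rw [show Matrix.toEuclideanLin M x' = WithLp.toLp 2 (M.mulVec x) from rfl]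
    simp [x', PiLp.inner_apply, RCLike.inner_apply, dotProduct, mul_comm]
  have h2 : x ⬝ᵥ x = inner ℝ x' x' := by
    simp only [x', PiLp.inner_apply, RCLike.inner_apply, dotProduct, conj_trivial]
  rw [h1, h2]
  calc |(inner ℝ x' (Matrix.toEuclideanLin M x') : ℝ)|
      ≤ ‖x'‖ * ‖Matrix.toEuclideanLin M x'‖ := abs_real_inner_le_norm _ _
    _ ≤ ‖x'‖ * (specNorm M * ‖x'‖) := by
        refine mul_le_mul_of_nonneg_left ?_ (norm_nonneg _)
        have h := (LinearMap.toContinuousLinearMap (Matrix.toEuclideanLin M)).le_opNorm x'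
        simp only [LinearMap.coe_toContinuousLinearMap] at h
        exact h
    _ = specNorm M * (‖x'‖ * ‖x'‖) := by ring
    _ = specNorm M * inner ℝ x' x' := by rw [real_inner_self_eq_norm_mul_norm]

/-- Weyl's eigenvalue perturbation inequality (one direction). -/
lemma weyl {n : ℕ} (A B : Matrix (Fin n) (Fin n) ℝ)
    (lamA lamB : Fin n → ℝ) (v w : Fin n → Fin n → ℝ)
    (hmA : Monotone lamA) (heA : ∀ i, A *ᵥ v i = lamA i • v i)
    (hoA : ∀ i j, v i ⬝ᵥ v j = if i = j then (1 : ℝ) else 0)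
    (hmB : Monotone lamB) (heB : ∀ i, B *ᵥ w i = lamB i • w i)
    (hoB : ∀ i j, w i ⬝ᵥ w j = if i = j then (1 : ℝ) else 0)
    (k : Fin n) : lamB k - lamA k ≤ specNorm (B - A) := by
  classical
  have hgS : Function.Injective (fun j : {j // j ∈ Finset.Iic k} => (j.1 : Fin n)) :=
    Subtype.val_injective
  have hgT : Function.Injective (fun j : {j // j ∈ Finset.Ici k} => (j.1 : Fin n)) :=
    Subtype.val_injective
  have liS : LinearIndependent ℝ (fun j : {j // j ∈ Finset.Iic k} => v j.1) :=
    orth_li hoA hgS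
  have liT : LinearIndependent ℝ (fun j : {j // j ∈ Finset.Ici k} => w j.1) :=
    orth_li hoB hgT
  set S := Submodule.span ℝ (Set.range (fun j : {j // j ∈ Finset.Iic k} => v j.1)) with hS
  set T := Submodule.span ℝ (Set.range (fun j : {j // j ∈ Finset.Ici k} => w j.1)) with hT
  have dS : Module.finrank ℝ S = (k : ℕ) + 1 := by
    rw [hS, finrank_span_eq_card liS, Fintype.card_coe, Fin.card_Iic]
  have dT : Module.finrank ℝ T = n - (k : ℕ) := by
    rw [hT, finrank_span_eq_card liT, Fintype.card_coe, Fin.card_Ici]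
  have hsup : Module.finrank ℝ ↥(S ⊔ T) ≤ n := by
    have h1 := Submodule.finrank_le (S ⊔ T)
    rwa [Module.finrank_fin_fun ℝ] at h1
  have hinf : 0 < Module.finrank ℝ ↥(S ⊓ T) := by
    have h := Submodule.finrank_sup_add_finrank_inf_eq S T
    rw [dS, dT] at h
    have hk := k.isLt
    omega
  have hST : S ⊓ T ≠ ⊥ := by
    intro h
    rw [h] at hinf
    simp [finrank_bot] at hinf
  obtain ⟨x, hxST, hx0⟩ := (Submodule.ne_bot_iff _).mp hST
  obtain ⟨hxS, hxT⟩ := Submodule.mem_inf.mp hxST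
  obtain ⟨c, hc⟩ := (Submodule.mem_span_range_iff_exists_fun ℝ).mp hxS
  obtain ⟨d, hd⟩ := (Submodule.mem_span_range_iff_exists_fun ℝ).mp hxT
  have hdpos : 0 < x ⬝ᵥ x := by
    have hne : ∃ i, x i ≠ 0 := by
      by_contra h
      push_neg at h
      exact hx0 (funext h)
    obtain ⟨i, hi⟩ := hne
    exact Finset.sum_pos' (fun j _ => mul_self_nonneg (x j))
      ⟨i, Finset.mem_univ i, mul_self_pos.mpr hi⟩
  -- expansions
  have hxxc : x ⬝ᵥ x = ∑ i, c i * c i := by rw [← hc]; exact orth_dot_sum hoA hgS c c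
  have hxxd : x ⬝ᵥ x = ∑ i, d i * d i := by rw [← hd]; exact orth_dot_sum hoB hgT d d
  have hAx : A *ᵥ x = ∑ i : {j // j ∈ Finset.Iic k}, (lamA i.1 * c i) • v i.1 := by
    rw [← hc, mulVec_sum']
    congr 1
    funext i
    rw [Matrix.mulVec_smul, heA, smul_smul, mul_comm]
  have hBx : B *ᵥ x = ∑ i : {j // j ∈ Finset.Ici k}, (lamB i.1 * d i) • w i.1 := by
    rw [← hd, mulVec_sum']
    congr 1
    funext i
    rw [Matrix.mulVec_smul, heB, smul_smul, mul_comm]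
  have hqA : x ⬝ᵥ A *ᵥ x = ∑ i : {j // j ∈ Finset.Iic k}, c i * (lamA i.1 * c i) := by
    rw [hAx]
    conv_lhs => rw [← hc]
    exact orth_dot_sum hoA hgS c _
  have hqB : x ⬝ᵥ B *ᵥ x = ∑ i : {j // j ∈ Finset.Ici k}, d i * (lamB i.1 * d i) := by
    rw [hBx]
    conv_lhs => rw [← hd]
    exact orth_dot_sum hoB hgT d _
  have h1 : x ⬝ᵥ A *ᵥ x ≤ lamA k * (x ⬝ᵥ x) := by
    rw [hqA, hxxc, Finset.mul_sum]
    refine Finset.sum_le_sum fun i _ => ?_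
    have hik : lamA i.1 ≤ lamA k := hmA (Finset.mem_Iic.mp i.2)
    nlinarith [mul_self_nonneg (c i)]
  have h2 : lamB k * (x ⬝ᵥ x) ≤ x ⬝ᵥ B *ᵥ x := by
    rw [hqB, hxxd, Finset.mul_sum]
    refine Finset.sum_le_sum fun i _ => ?_
    have hik : lamB k ≤ lamB i.1 := hmB (Finset.mem_Ici.mp i.2)
    nlinarith [mul_self_nonneg (d i)]
  have h3 : x ⬝ᵥ (B - A) *ᵥ x ≤ specNorm (B - A) * (x ⬝ᵥ x) :=
    le_trans (le_abs_self _) (dot_spec_bound _ _)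
  have h4 : x ⬝ᵥ (B - A) *ᵥ x = x ⬝ᵥ B *ᵥ x - x ⬝ᵥ A *ᵥ x := by
    rw [Matrix.sub_mulVec, dotProduct_sub]
  have h5 : (lamB k - lamA k) * (x ⬝ᵥ x) ≤ specNorm (B - A) * (x ⬝ᵥ x) := by nlinarith
  exact le_of_mul_le_mul_right (by linarith [h5]) hdpos

lemma perm_orth {n : ℕ} {P : Matrix (Fin n) (Fin n) ℝ} (hP : IsPermMatrix P) :
    Pᵀ * P = 1 := by
  obtain ⟨σ, hσ⟩ := hP
  ext i j
  simp only [Matrix.mul_apply, Matrix.transpose_apply, hσ, Matrix.one_apply]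
  have h1 : ∀ k : Fin n, (if σ i = k then (1:ℝ) else 0) * (if σ j = k then (1:ℝ) else 0)
      = if σ i = k then (if σ j = k then (1:ℝ) else 0) else 0 := by
    intro k; by_cases h : σ i = k <;> simp [h]
  rw [Finset.sum_congr rfl fun k _ => h1 k, Finset.sum_ite_eq]
  simp only [Finset.mem_univ, if_true]
  by_cases h : i = j
  · simp [h]
  · have h2 : σ j ≠ σ i := fun hh => h (σ.injective hh).symm
    simp [h, h2]

lemma specNorm_neg {m k : ℕ} (A : Matrix (Fin m) (Fin k) ℝ) :
    specNorm (-A) = specNorm A := by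
  unfold specNorm
  rw [map_neg, map_neg, norm_neg]

/-- For real symmetric `L, L'` with sorted eigenvalues `lam, lam'`,
a permutation matrix `P`, and a `J_ρ`-Lipschitz function `ρ` on `[0,∞)`,
`∑_j |ρ(|λ_j − λ_i|) − ρ(|λ'_j − λ'_i|)| ≤ 2n J_ρ ‖L − P L' Pᵀ‖₂` for every `i`. -/
theorem stmt_11 {n : ℕ} (L L' : Matrix (Fin n) (Fin n) ℝ)
    (hL : L.IsSymm) (hL' : L'.IsSymm)
    (P : Matrix (Fin n) (Fin n) ℝ) (hP : IsPermMatrix P)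
    (lam lam' : Fin n → ℝ) (v v' : Fin n → Fin n → ℝ)
    (hsys : IsSortedEigenSystem L lam v) (hsys' : IsSortedEigenSystem L' lam' v')
    (Jρ : ℝ) (ρ : ℝ → ℝ)
    (hρlip : ∀ x x' : ℝ, 0 ≤ x → 0 ≤ x' → |ρ x - ρ x'| ≤ Jρ * |x - x'|)
    (i : Fin n) :
    ∑ j, abs (ρ |lam j - lam i| - ρ |lam' j - lam' i|) ≤
      2 * n * Jρ * specNorm (L - P * L' * Pᵀ) := by
  classical
  obtain ⟨hm, he, ho⟩ := hsys
  obtain ⟨hm', he', ho'⟩ := hsys'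
  set M := P * L' * Pᵀ with hM
  set ε := specNorm (L - M) with hε
  have hPo : Pᵀ * P = 1 := perm_orth hP
  -- eigensystem of M
  set w : Fin n → Fin n → ℝ := fun j => P *ᵥ v' j with hw
  have heM : ∀ j, M *ᵥ w j = lam' j • w j := by
    intro j
    rw [hw, hM]
    rw [Matrix.mulVec_mulVec, Matrix.mul_assoc (P * L') Pᵀ P, hPo, Matrix.mul_one,
      ← Matrix.mulVec_mulVec, he', Matrix.mulVec_smul]
  have hoM : ∀ j k, w j ⬝ᵥ w k = if j = k then (1 : ℝ) else 0 := by
    intro j k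
    have e : (P *ᵥ v' j) ⬝ᵥ (P *ᵥ v' k) = v' j ⬝ᵥ v' k := by
      rw [Matrix.dotProduct_mulVec]
      have h2 : (P *ᵥ v' j) ᵥ* P = v' j := by
        rw [← Matrix.transpose_transpose P, Matrix.vecMul_transpose, Matrix.transpose_transpose,
          Matrix.mulVec_mulVec, hPo, Matrix.one_mulVec]
      rw [h2]
    rw [hw]
    exact e.trans (ho' j k)
  -- eigenvalue perturbation
  have hspec : specNorm (M - L) = ε := by
    rw [hε, ← neg_sub L M, specNorm_neg]
  have hkey : ∀ k : Fin n, |lam k - lam' k| ≤ ε := by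
    intro k
    rw [abs_le]
    constructor
    · have h := weyl L M lam lam' v w hm he ho hm' heM hoM k
      rw [hspec] at h
      linarith
    · have h := weyl M L lam' lam w v hm' heM hoM hm he ho k
      rw [← hε] at h
      linarith
  have hJ : 0 ≤ Jρ := by
    have := hρlip 0 1 le_rfl zero_le_one
    have h0 : (0:ℝ) ≤ |ρ 0 - ρ 1| := abs_nonneg _
    simp at this
    linarith
  have hεnn : 0 ≤ ε := norm_nonneg _
  have hterm : ∀ j : Fin n, abs (ρ |lam j - lam i| - ρ |lam' j - lam' i|) ≤ 2 * Jρ * ε := by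
    intro j
    calc abs (ρ |lam j - lam i| - ρ |lam' j - lam' i|)
        ≤ Jρ * abs (|lam j - lam i| - |lam' j - lam' i|) :=
          hρlip _ _ (abs_nonneg _) (abs_nonneg _)
      _ ≤ Jρ * abs ((lam j - lam i) - (lam' j - lam' i)) :=
          mul_le_mul_of_nonneg_left (abs_abs_sub_abs_le_abs_sub _ _) hJ
      _ ≤ Jρ * (abs (lam j - lam' j) + abs (lam i - lam' i)) := by
          refine mul_le_mul_of_nonneg_left ?_ hJ
          calc abs ((lam j - lam i) - (lam' j - lam' i))
              = abs ((lam j - lam' j) + (-(lam i - lam' i))) := by ring_nf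
            _ ≤ abs (lam j - lam' j) + abs (-(lam i - lam' i)) := abs_add_le _ _
            _ = abs (lam j - lam' j) + abs (lam i - lam' i) := by rw [abs_neg]
      _ ≤ Jρ * (ε + ε) :=
          mul_le_mul_of_nonneg_left (add_le_add (hkey j) (hkey i)) hJ
      _ = 2 * Jρ * ε := by ring
  calc ∑ j, abs (ρ |lam j - lam i| - ρ |lam' j - lam' i|)
      ≤ ∑ _j : Fin n, 2 * Jρ * ε := Finset.sum_le_sum fun j _ => hterm j
    _ = n * (2 * Jρ * ε) := by rw [Finset.sum_const, Finset.card_univ, Fintype.card_fin]; ring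
    _ = 2 * n * Jρ * ε := by ring
end
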